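/- arXiv:1202.5793 — 8 statements merged into one kernel-verified Lean document; each statement's English description precedes it below -/
import Mathlib

section
/- Let a : Ω → ℂ∗ be a holomorphic nowhere-vanishing function which depends only on the entries x₁₁, x₂₂ and the product x₁₂x₂₁, i.e. a(x) = a(y) whenever x, y ∈ Ω satisfy x₁₁ = y₁₁, x₂₂ = y₂₂ and x₁₂x₂₁ = y₁₂y₂₁. Then the diagonal conjugation D̃_a : x ↦ d(x) x d(x)⁻¹, where d(x) = diag(a(x), a(x)⁻¹), is an automorphism of Ω. -/
open Matrix Set

attribute [local instance] Matrix.normedAddCommGroup Matrix.normedSpace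

noncomputable section

/-- The algebra of `2 × 2` complex matrices. -/
abbrev M2 : Type := Matrix (Fin 2) (Fin 2) ℂ

/-- The spectral ball: `2 × 2` complex matrices whose spectral radius is less than `1`. -/
def SpectralBall : Set M2 := {x : M2 | ∀ z ∈ spectrum ℂ x, ‖z‖ < 1}

/-- `f` is an automorphism of the domain `D`. -/
def IsAutomorphismOn {E : Type*} [NormedAddCommGroup E] [NormedSpace ℂ E]
    (D : Set E) (f : E → E) : Prop :=
  DifferentiableOn ℂ f D ∧ MapsTo f D D ∧
    ∃ g : E → E, DifferentiableOn ℂ g D ∧ MapsTo g D D ∧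
      (∀ x ∈ D, g (f x) = x) ∧ (∀ x ∈ D, f (g x) = x)

/-- The diagonal matrix `diag (a, a⁻¹)`. -/
def DiagMat (a : ℂ) : M2 := Matrix.diagonal ![a, a⁻¹]

/-! Conjugation by `diag(b, b⁻¹)` fixes `x₁₁` and `x₂₂` and multiplies `x₁₂`, `x₂₁` by `b²`, `b⁻²`,
so it fixes `x₁₂x₂₁`, hence the value of `a`. These conjugations form an action of `ℂ*`, so
`x ↦ diag(a(x), a(x)⁻¹)⁻¹ x diag(a(x), a(x)⁻¹)` inverts the map, and being conjugations they
preserve the spectrum, hence the spectral ball. -/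

lemma differentiableOn_M2_iff {E : Type*} [NormedAddCommGroup E] [NormedSpace ℂ E]
    {F : E → M2} {s : Set E} :
    DifferentiableOn ℂ F s ↔ ∀ i j, DifferentiableOn ℂ (fun x => F x i j) s :=
  differentiableOn_pi.trans (forall_congr' fun _ => differentiableOn_pi)

lemma DiagMat_mul (b c : ℂ) : DiagMat b * DiagMat c = DiagMat (b * c) := by
  simp only [DiagMat, diagonal_mul_diagonal, mul_inv]
  congr 1
  ext i
  fin_cases i <;> simp

lemma DiagMat_one : DiagMat 1 = 1 := by
  simp [DiagMat, ← diagonal_one]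

lemma DiagMat_mul_DiagMat_inv {b : ℂ} (hb : b ≠ 0) : DiagMat b * DiagMat b⁻¹ = 1 := by
  rw [DiagMat_mul, mul_inv_cancel₀ hb, DiagMat_one]

lemma DiagMat_inv {b : ℂ} (hb : b ≠ 0) : (DiagMat b)⁻¹ = DiagMat b⁻¹ :=
  inv_eq_right_inv (DiagMat_mul_DiagMat_inv hb)

def DiagMat.unit {b : ℂ} (hb : b ≠ 0) : M2ˣ :=
  ⟨DiagMat b, DiagMat b⁻¹, DiagMat_mul_DiagMat_inv hb, by
    simpa using DiagMat_mul_DiagMat_inv (inv_ne_zero hb)⟩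

def diagConj (b : ℂ) (x : M2) : M2 := DiagMat b * x * DiagMat b⁻¹

lemma diagConj_eq_of_ne_zero {b : ℂ} (hb : b ≠ 0) (x : M2) :
    DiagMat b * x * (DiagMat b)⁻¹ = diagConj b x := by
  rw [DiagMat_inv hb, diagConj]

lemma diagConj_one (x : M2) : diagConj 1 x = x := by
  simp [diagConj, DiagMat_one]

lemma diagConj_diagConj (b c : ℂ) (x : M2) : diagConj b (diagConj c x) = diagConj (b * c) x := by
  simp only [diagConj, mul_assoc, DiagMat_mul, _root_.mul_inv_rev]
  rw [← mul_assoc, DiagMat_mul]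

lemma diagConj_eq {b : ℂ} (hb : b ≠ 0) (x : M2) :
    diagConj b x = !![x 0 0, b ^ 2 * x 0 1; (b ^ 2)⁻¹ * x 1 0, x 1 1] := by
  ext i j
  fin_cases i <;> fin_cases j <;>
    simp only [diagConj, DiagMat, inv_inv, Fin.zero_eta, Fin.mk_one, mul_diagonal, diagonal_mul,
      of_apply, cons_val', cons_val_zero, cons_val_one, cons_val_fin_one] <;>
    field_simp

lemma diagConj_apply_zero_zero {b : ℂ} (hb : b ≠ 0) (x : M2) : diagConj b x 0 0 = x 0 0 := by
  simp [diagConj_eq hb]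

lemma diagConj_apply_one_one {b : ℂ} (hb : b ≠ 0) (x : M2) : diagConj b x 1 1 = x 1 1 := by
  simp [diagConj_eq hb]

lemma diagConj_apply_zero_one_mul_apply_one_zero {b : ℂ} (hb : b ≠ 0) (x : M2) :
    diagConj b x 0 1 * diagConj b x 1 0 = x 0 1 * x 1 0 := by
  simp only [diagConj_eq hb, of_apply, cons_val', cons_val_zero, cons_val_one, cons_val_fin_one]
  field_simp

lemma diagConj_mem_spectralBall {b : ℂ} (hb : b ≠ 0) {x : M2} (hx : x ∈ SpectralBall) :
    diagConj b x ∈ SpectralBall := by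
  have : diagConj b x = DiagMat.unit hb * x * ↑(DiagMat.unit hb)⁻¹ := rfl
  rwa [SpectralBall, mem_ofPred_eq, this, spectrum.units_conjugate]

lemma DifferentiableOn.diagConj {b : M2 → ℂ} {s : Set M2} (hb : DifferentiableOn ℂ b s)
    (hb0 : ∀ x ∈ s, b x ≠ 0) : DifferentiableOn ℂ (fun x => diagConj (b x) x) s := by
  have hentry (i j : Fin 2) : DifferentiableOn ℂ (fun x : M2 => x i j) s := by fun_prop
  have hb2 : DifferentiableOn ℂ (fun x => b x ^ 2) s := hb.pow 2
  refine (differentiableOn_M2_iff.2 fun i j => ?_).congr fun x hx => diagConj_eq (hb0 x hx) x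
  fin_cases i <;> fin_cases j <;>
    simp only [Fin.zero_eta, Fin.mk_one, of_apply, cons_val', cons_val_zero, cons_val_one,
      cons_val_fin_one]
  · exact hentry 0 0
  · exact hb2.mul (hentry 0 1)
  · exact (hb2.inv fun x hx => pow_ne_zero 2 (hb0 x hx)).mul (hentry 1 0)
  · exact hentry 1 1

/-- If a holomorphic nowhere-vanishing function `a` on the spectral ball depends only on
`x₁₁`, `x₂₂` and `x₁₂x₂₁`, then the diagonal conjugation
`x ↦ diag(a(x), a(x)⁻¹) x diag(a(x), a(x)⁻¹)⁻¹` is an automorphism of the spectral ball. -/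
theorem diagonal_conjugation_is_automorphism
    (a : M2 → ℂ) (ha : DifferentiableOn ℂ a SpectralBall)
    (ha0 : ∀ x ∈ SpectralBall, a x ≠ 0)
    (hdep : ∀ x ∈ SpectralBall, ∀ y ∈ SpectralBall,
      x 0 0 = y 0 0 → x 1 1 = y 1 1 → x 0 1 * x 1 0 = y 0 1 * y 1 0 → a x = a y) :
    IsAutomorphismOn SpectralBall
      (fun x => DiagMat (a x) * x * (DiagMat (a x))⁻¹) := by
  have ha0' (x) (hx : x ∈ SpectralBall) : (a x)⁻¹ ≠ 0 := inv_ne_zero (ha0 x hx)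
  have ha_diagConj {b : ℂ} (hb : b ≠ 0) {x} (hx : x ∈ SpectralBall) : a (diagConj b x) = a x :=
    hdep _ (diagConj_mem_spectralBall hb hx) x hx (diagConj_apply_zero_zero hb x)
      (diagConj_apply_one_one hb x) (diagConj_apply_zero_one_mul_apply_one_zero hb x)
  have hf (x) (hx : x ∈ SpectralBall) : DiagMat (a x) * x * (DiagMat (a x))⁻¹ = diagConj (a x) x :=
    diagConj_eq_of_ne_zero (ha0 x hx) x
  have hg (x) (hx : x ∈ SpectralBall) : diagConj (a x)⁻¹ x ∈ SpectralBall :=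
    diagConj_mem_spectralBall (ha0' x hx) hx
  refine ⟨(ha.diagConj ha0).congr hf, fun x hx => ?_, fun x => diagConj (a x)⁻¹ x,
    (ha.inv ha0).diagConj ha0', hg, fun x hx => ?_, fun x hx => ?_⟩
  · simpa only [hf x hx] using diagConj_mem_spectralBall (ha0 x hx) hx
  · simp only [hf x hx, ha_diagConj (ha0 x hx) hx, diagConj_diagConj, inv_mul_cancel₀ (ha0 x hx),
      diagConj_one]
  · simp only [hf _ (hg x hx)]
    rw [ha_diagConj (ha0' x hx) hx, diagConj_diagConj, mul_inv_cancel₀ (ha0 x hx), diagConj_one]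
end
end

section
/- Let g : ℂ∗ → ℂ be a holomorphic function such that the map z ↦ exp(g(z))·z is a bijection of ℂ∗ = ℂ \ {0} onto itself. Then g is constant. -/
/-!
Lift `f w = exp (g w) * w` through the covering `exp : ℂ → ℂ∗` to the entire function
`G z = g (exp z) + z`, which satisfies `exp ∘ G = f ∘ exp` and `G (z + 2πi) = G z + 2πi`.
Since `f` is a bijection of `ℂ∗`, `G` is a bijection of `ℂ`, hence a homeomorphism and so proper;
then `w ↦ 1 / (G (1 / w) - G 0)` has a removable zero of finite order at `0`, which bounds `G` by a
power of `|z|`, and `G` is a polynomial. The polynomial `G z - z` is `2πi`-periodic, hence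
constant, and `g (exp z) = G z - z`.
-/

open Complex Filter Bornology Function Asymptotics Topology Polynomial

open scoped Real

theorem Polynomial.eq_C_eval_zero_of_periodic {R : Type*} [CommRing R] [IsDomain R] [CharZero R]
    {p : R[X]} {c : R} (hc : c ≠ 0) (hp : Periodic p.eval c) : p = C (p.eval 0) := by
  rw [← sub_eq_zero]
  refine eq_zero_of_infinite_isRoot _ <| Set.infinite_of_injective_forall_mem
    (f := fun n : ℕ => (n : R) * c) (fun a b hab => ?_) fun n => ?_
  · exact_mod_cast mul_right_cancel₀ hc hab
  · simp [hp.nat_mul_eq n]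

namespace Differentiable

variable {f : ℂ → ℂ}

theorem exists_polynomial_of_isLittleO_pow (hf : Differentiable ℂ f) {n : ℕ}
    (hn : f =o[cobounded ℂ] (· ^ n)) : ∃ p : ℂ[X], ∀ z, f z = p.eval z := by
  induction n generalizing f with
  | zero =>
    refine ⟨0, fun z => hf.apply_eq_of_tendsto_cocompact z ?_⟩
    rw [← Metric.cobounded_eq_cocompact]
    simpa using (isLittleO_one_iff ℂ).1 (by simpa using hn)
  | succ n ih =>
    have hd : Differentiable ℂ (dslope f 0) := by
      rw [← differentiableOn_univ] at hf ⊢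
      exact (differentiableOn_dslope univ_mem).2 hf
    have hsub : (fun z => f z - f 0) =o[cobounded ℂ] (· ^ (n + 1)) :=
      hn.sub <| isLittleO_const_left.2 <| .inr <| by
        simpa [Function.comp_def] using
          (tendsto_pow_atTop n.succ_ne_zero).comp tendsto_norm_cobounded_atTop
    have ho : dslope f 0 =o[cobounded ℂ] (· ^ n) := by
      refine ((isBigO_refl (·⁻¹) _).mul_isLittleO hsub).congr' ?_ ?_ <;>
        filter_upwards [eventually_ne_cobounded 0] with z hz
      · rw [dslope_of_ne _ hz, slope_def_field, sub_zero, div_eq_inv_mul]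
      · rw [pow_succ', inv_mul_cancel_left₀ hz]
    obtain ⟨q, hq⟩ := ih hd ho
    refine ⟨C (f 0) + X * q, fun z => ?_⟩
    have hslope : z * dslope f 0 z = f z - f 0 := by simpa using sub_smul_dslope f 0 z
    simp only [eval_add, eval_C, eval_mul, eval_X, ← hq, hslope, add_sub_cancel]

theorem exists_polynomial_of_isBigO_pow (hf : Differentiable ℂ f) {n : ℕ}
    (hn : f =O[cobounded ℂ] (· ^ n)) : ∃ p : ℂ[X], ∀ z, f z = p.eval z :=
  hf.exists_polynomial_of_isLittleO_pow <| hn.trans_isLittleO <|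
    isLittleO_pow_pow_cobounded_of_lt n.lt_succ_self

theorem exists_isBigO_pow_of_tendsto_cobounded (hf : Differentiable ℂ f)
    (hlim : Tendsto f (cobounded ℂ) (cobounded ℂ)) : ∃ n : ℕ, f =O[cobounded ℂ] (· ^ n) := by
  set k : ℂ → ℂ := fun w => f w⁻¹ - f 0
  have hk : Tendsto k (𝓝[≠] 0) (cobounded ℂ) :=
    (tendsto_sub_const_cobounded (f 0)).comp (hlim.comp tendsto_inv₀_nhdsNE_zero)
  have hk0 : ∀ᶠ w in 𝓝[≠] 0, k w ≠ 0 := hk.eventually_ne_cobounded 0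
  set h : ℂ → ℂ := fun w => (k w)⁻¹
  -- `k 0 = 0` since `0⁻¹ = 0`, so `h 0 = 0` is the limit of `h` at the origin.
  have hA : AnalyticAt ℂ h 0 := by
    refine analyticAt_of_differentiable_on_punctured_nhds_of_continuousAt ?_ ?_
    · filter_upwards [hk0, self_mem_nhdsWithin] with w hw hw0
      exact (((hf _).comp w (differentiableAt_inv hw0)).sub_const _).inv hw
    · refine continuousWithinAt_compl_self.1 ?_
      simpa [ContinuousWithinAt, h, k, Function.comp_def] using tendsto_inv₀_cobounded.comp hk
  have hord : analyticOrderAt h 0 ≠ ⊤ := fun htop => by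
    obtain ⟨w, hw, hw'⟩ :=
      (((analyticOrderAt_eq_top.1 htop).filter_mono nhdsWithin_le_nhds).and hk0).exists
    exact hw' (inv_eq_zero.1 hw)
  obtain ⟨n, hn⟩ := ENat.ne_top_iff_exists.1 hord
  obtain ⟨u, hu, hu0, hhu⟩ := hA.analyticOrderAt_eq_natCast.1 hn.symm
  have hkO : k =O[𝓝[≠] 0] fun w => w⁻¹ ^ n := by
    refine ((isBigO_refl (fun w : ℂ => w⁻¹ ^ n) _).mul
      (((hu.continuousAt.inv₀ hu0).tendsto.mono_left nhdsWithin_le_nhds).isBigO_one ℂ)).congr'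
      ?_ (.of_forall fun _ => mul_one _)
    filter_upwards [hhu.filter_mono nhdsWithin_le_nhds] with w hw
    rw [← inv_inv (k w), show (k w)⁻¹ = h w from rfl, hw, sub_zero, smul_eq_mul, mul_inv, inv_pow,
      Pi.inv_apply]
  refine ⟨n, ?_⟩
  have hsub : (fun z => f z - f 0) =O[cobounded ℂ] (· ^ n) := by
    simpa [Function.comp_def, k] using hkO.comp_tendsto tendsto_inv₀_cobounded'
  simpa using hsub.add ((isBigO_const_one ℂ (f 0) _).trans
    (by simpa using isBigO_pow_pow_cobounded_of_le (R := ℂ) n.zero_le))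

theorem tendsto_cobounded_of_bijective (hf : Differentiable ℂ f) (hbij : Bijective f) :
    Tendsto f (cobounded ℂ) (cobounded ℂ) := by
  have hopen : IsOpenMap f :=
    (analyticOnNhd_univ_iff_differentiable.2 hf).is_constant_or_isOpenMap.resolve_left
      fun ⟨w, hw⟩ => zero_ne_one (hbij.1 ((hw 0).trans (hw 1).symm))
  rw [Metric.cobounded_eq_cocompact]
  exact ((Equiv.ofBijective f hbij).toHomeomorphOfContinuousOpen hf.continuous
    hopen).map_cocompact.le

theorem exists_polynomial_of_bijective (hf : Differentiable ℂ f) (hbij : Bijective f) :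
    ∃ p : ℂ[X], ∀ z, f z = p.eval z :=
  have ⟨_, hO⟩ := hf.exists_isBigO_pow_of_tendsto_cobounded (hf.tendsto_cobounded_of_bijective hbij)
  hf.exists_polynomial_of_isBigO_pow hO

end Differentiable

noncomputable def expLift (g : ℂ → ℂ) (z : ℂ) : ℂ := g (exp z) + z

section expLift

variable {g : ℂ → ℂ}

theorem exp_expLift (z : ℂ) : exp (expLift g z) = exp (g (exp z)) * exp z :=
  exp_add _ _

theorem expLift_add_of_exp_eq_one (z : ℂ) {m : ℂ} (hm : exp m = 1) :
    expLift g (z + m) = expLift g z + m := by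
  simp only [expLift, exp_add, hm, mul_one, add_assoc]

theorem differentiable_expLift (hg : DifferentiableOn ℂ g {0}ᶜ) : Differentiable ℂ (expLift g) :=
  fun z => ((hg.differentiableAt (isOpen_compl_singleton.mem_nhds (exp_ne_zero z))).comp z
    (differentiable_exp z)).add differentiableAt_id

theorem injective_expLift (hg : Set.InjOn (fun w => exp (g w) * w) {0}ᶜ) :
    Injective (expLift g) := by
  intro a b hab
  have hexp : exp a = exp b :=
    hg (exp_ne_zero a) (exp_ne_zero b) (by simpa only [exp_expLift] using congrArg exp hab)
  simpa [expLift, hexp] using hab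

theorem surjective_expLift (hg : Set.SurjOn (fun w => exp (g w) * w) {0}ᶜ {0}ᶜ) :
    Surjective (expLift g) := by
  intro w
  obtain ⟨u, hu, hfu⟩ := hg (exp_ne_zero w)
  obtain ⟨k, hk⟩ : ∃ k : ℤ, expLift g (log u) = w + k * (2 * π * I) := by
    refine exp_eq_exp_iff_exists_int.1 ?_
    rw [exp_expLift, exp_log hu]
    exact hfu
  refine ⟨log u + -(k * (2 * π * I)), ?_⟩
  rw [expLift_add_of_exp_eq_one _ (by rw [exp_neg, exp_int_mul_two_pi_mul_I, inv_one]), hk]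
  ring

end expLift

/-- If `g` is holomorphic on the punctured plane `ℂ∗` and `z ↦ exp(g(z))·z` is a bijection of
`ℂ∗` onto itself, then `g` is constant on `ℂ∗`. -/
theorem constant_of_exp_mul_bijective
    (g : ℂ → ℂ) (hg : DifferentiableOn ℂ g {(0 : ℂ)}ᶜ)
    (hbij : Set.BijOn (fun z => Complex.exp (g z) * z) {(0 : ℂ)}ᶜ {(0 : ℂ)}ᶜ) :
    ∀ z ∈ ({(0 : ℂ)}ᶜ : Set ℂ), ∀ w ∈ ({(0 : ℂ)}ᶜ : Set ℂ), g z = g w := by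
  obtain ⟨p, hp⟩ := (differentiable_expLift hg).exists_polynomial_of_bijective
    ⟨injective_expLift hbij.injOn, surjective_expLift hbij.surjOn⟩
  have hper : Periodic (p - X).eval (2 * π * I) := fun z => by
    simp only [eval_sub, eval_X, ← hp, expLift_add_of_exp_eq_one z exp_two_pi_mul_I]
    ring
  have hq := eq_C_eval_zero_of_periodic two_pi_I_ne_zero hper
  have hconst : ∀ x : ℂ, x ≠ 0 → g x = (p - X).eval 0 := fun x hx =>
    calc g x = expLift g (log x) - log x := by simp [expLift, exp_log hx]
      _ = (p - X).eval (log x) := by simp [hp]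
      _ = (p - X).eval 0 := by rw [congrArg (Polynomial.eval (log x)) hq, eval_C]
  intro z hz w hw
  rw [hconst z hz, hconst w hw]
end

section
/- Let f : ℂ × ℂ∗ → ℂ be holomorphic. The map Φ(x, y) := (x − f(x, y), y) is an automorphism of ℂ × ℂ∗ (a bijective holomorphic self-map with holomorphic inverse) if and only if there exist a holomorphic nowhere-vanishing function c : ℂ∗ → ℂ∗ and a holomorphic function γ : ℂ∗ → ℂ such that f(x, y) = x·(1 − c(y)) − γ(y) for all (x, y) ∈ ℂ × ℂ∗. -/
open Set

noncomputable section

/-- The domain `ℂ × ℂ∗`. -/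
def PuncturedProd : Set (ℂ × ℂ) := Set.univ ×ˢ {(0 : ℂ)}ᶜ

/-!
On each slice `y ≠ 0` an automorphism of the shear form restricts to an entire map
`h x = x - f (x, y)` with an entire left inverse. Such an `h` is proper, so `z ↦ 1 / h (1 / z)`
extends holomorphically over `0` with a zero of some finite order `n`; thus `h` grows like
`|x| ^ n`, is a polynomial by Liouville's theorem, and its derivative has no zero, so it is
affine. Its coefficients `h 0` and `h 1 - h 0 ≠ 0` depend holomorphically on `y`, which gives
`γ` and `c`. Conversely `(x, y) ↦ ((x - γ y) / c y, y)` inverts the shear.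
-/

open Filter Function Bornology Polynomial Asymptotics
open scoped Topology

theorem Function.LeftInverse.tendsto_cocompact {X Y : Type*} [TopologicalSpace X]
    [TopologicalSpace Y] {h : X → Y} {k : Y → X} (hkh : LeftInverse k h) (hk : Continuous k) :
    Tendsto h (cocompact X) (cocompact Y) :=
  (hasBasis_cocompact.tendsto_iff hasBasis_cocompact).2 fun K hK =>
    ⟨k '' K, hK.image hk, fun x hx hxK => hx ⟨h x, hxK, hkh x⟩⟩

theorem Function.LeftInverse.deriv_ne_zero {𝕜 : Type*} [NontriviallyNormedField 𝕜]
    {h k : 𝕜 → 𝕜} (hkh : LeftInverse k h) {x : 𝕜} (hk : DifferentiableAt 𝕜 k (h x))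
    (hh : DifferentiableAt 𝕜 h x) : deriv h x ≠ 0 := by
  intro h0
  have hid : HasDerivAt (k ∘ h) (deriv k (h x) * deriv h x) x :=
    hk.hasDerivAt.comp x hh.hasDerivAt
  rw [hkh.comp_eq_id, h0, mul_zero] at hid
  exact zero_ne_one (hid.unique (hasDerivAt_id x))

theorem Polynomial.natDegree_le_one_of_forall_eval_derivative_ne_zero {K : Type*} [Field K]
    [IsAlgClosed K] [CharZero K] {P : K[X]} (hP : ∀ z, P.derivative.eval z ≠ 0) :
    P.natDegree ≤ 1 := by
  by_contra! hdeg
  have hpos : 0 < P.derivative.degree := by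
    rw [← natDegree_pos_iff_degree_pos, natDegree_derivative]
    omega
  obtain ⟨z, hz⟩ := IsAlgClosed.exists_root _ hpos.ne'
  exact hP z hz

namespace Complex

variable {h : ℂ → ℂ}

-- The `update` removes the junk value `(h 0⁻¹)⁻¹ = (h 0)⁻¹` at `z = 0`.
theorem analyticAt_update_inv_comp_inv (hh : Differentiable ℂ h)
    (htend : Tendsto h (cobounded ℂ) (cobounded ℂ)) :
    AnalyticAt ℂ (update (fun z => (h z⁻¹)⁻¹) 0 0) 0 := by
  have hne : ∀ᶠ z in 𝓝 0, z ∈ ({0}ᶜ : Set ℂ) → h z⁻¹ ≠ 0 := eventually_nhdsWithin_iff.1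
    ((htend.comp tendsto_inv₀_nhdsNE_zero).eventually (eventually_ne_cobounded 0))
  refine DifferentiableOn.analyticAt ?_ hne
  rw [← differentiableOn_compl_singleton_and_continuousAt_iff hne]
  constructor
  · rintro z ⟨hz, hz0 : z ≠ 0⟩
    refine (((hh _).comp z (differentiableAt_inv hz0)).inv (hz hz0)).differentiableWithinAt.congr
      (fun w hw => update_of_ne hw.2 _ _) (update_of_ne hz0 _ _)
  · rw [continuousAt_update_same]
    exact tendsto_inv₀_cobounded.comp (htend.comp tendsto_inv₀_nhdsNE_zero)

theorem exists_isBigO_pow_of_tendsto_cobounded (hh : Differentiable ℂ h)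
    (htend : Tendsto h (cobounded ℂ) (cobounded ℂ)) :
    ∃ n : ℕ, h =O[cobounded ℂ] (· ^ n) := by
  have hH : ∀ z ≠ 0, update (fun z => (h z⁻¹)⁻¹) 0 0 z = (h z⁻¹)⁻¹ :=
    fun z hz => update_of_ne hz _ _
  have hH_ne : ∀ᶠ z in 𝓝[≠] 0, update (fun z => (h z⁻¹)⁻¹) 0 0 z ≠ 0 := by
    filter_upwards [(htend.comp tendsto_inv₀_nhdsNE_zero).eventually (eventually_ne_cobounded 0),
      self_mem_nhdsWithin] with z hz hz0
    rw [hH z hz0]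
    exact inv_ne_zero hz
  obtain ⟨n, g, hg, hg0, hHg⟩ :=
    (analyticAt_update_inv_comp_inv hh htend).exists_eventuallyEq_pow_smul_nonzero_iff.2
      fun hzero => ((hzero.filter_mono nhdsWithin_le_nhds).and hH_ne).exists.elim
        fun _ hz => hz.2 hz.1
  have hh_eq : h =ᶠ[cobounded ℂ] fun w => w ^ n * (g w⁻¹)⁻¹ := by
    filter_upwards [tendsto_inv₀_cobounded'.eventually (hHg.filter_mono nhdsWithin_le_nhds),
      eventually_ne_cobounded 0] with w hw hw0
    rw [hH _ (inv_ne_zero hw0), inv_inv, sub_zero, smul_eq_mul] at hw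
    rw [← inv_inv (h w), hw, mul_inv, inv_pow, inv_inv]
  have hg_lim : Tendsto (fun w => (g w⁻¹)⁻¹) (cobounded ℂ) (𝓝 (g 0)⁻¹) :=
    (hg.continuousAt.tendsto.comp tendsto_inv₀_cobounded).inv₀ hg0
  exact ⟨n, hh_eq.trans_isBigO (by simpa using (isBigO_refl (· ^ n) _).mul (hg_lim.isBigO_one ℂ))⟩

theorem exists_polynomial_eq_of_isBigO_pow {n : ℕ} (hh : Differentiable ℂ h)
    (hO : h =O[cobounded ℂ] (· ^ n)) : ∃ P : ℂ[X], ∀ z, h z = P.eval z := by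
  induction n generalizing h with
  | zero =>
    have hO1 : h =O[cocompact ℂ] (1 : ℂ → ℝ) := by
      rw [← Metric.cobounded_eq_cocompact]
      exact hO.trans ((isBigO_const_const (1 : ℂ) (one_ne_zero (α := ℝ)) _).congr
        (fun _ => (pow_zero _).symm) fun _ => rfl)
    have hbdd : IsBounded (range h) := hh.continuous.isBounded_range_iff_isBigO.2 hO1
    exact ⟨C (h 0), fun z => by simpa using hh.apply_eq_apply_of_bounded hbdd z 0⟩
  | succ n ih =>
    have hd : Differentiable ℂ (dslope h 0) := fun z =>
      ((differentiableOn_dslope univ_mem).2 hh.differentiableOn).differentiableAt univ_mem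
    have hconst : (fun _ => h 0) =O[cobounded ℂ] (· ^ (n + 1)) :=
      (isLittleO_const_left.2 <| Or.inr <| by
        simpa [Function.comp_def] using
          (tendsto_pow_atTop n.succ_ne_zero).comp tendsto_norm_cobounded_atTop).isBigO
    have hdO : dslope h 0 =O[cobounded ℂ] (· ^ n) := by
      have hslope : dslope h 0 =ᶠ[cobounded ℂ] fun z => z⁻¹ * (h z - h 0) := by
        filter_upwards [eventually_ne_cobounded 0] with z hz
        rw [dslope_of_ne _ hz, slope_def_field, sub_zero, div_eq_inv_mul]
      have hpow : (fun z : ℂ => z⁻¹ * z ^ (n + 1)) =ᶠ[cobounded ℂ] (· ^ n) := by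
        filter_upwards [eventually_ne_cobounded 0] with z hz
        rw [pow_succ, inv_mul_eq_iff_eq_mul₀ hz, mul_comm]
      exact hslope.trans_isBigO (((isBigO_refl _ _).mul (hO.sub hconst)).trans_eventuallyEq hpow)
    obtain ⟨P, hP⟩ := ih hd hdO
    refine ⟨C (h 0) + X * P, fun z => ?_⟩
    have hz := sub_smul_dslope h 0 z
    rw [sub_zero, smul_eq_mul] at hz
    rw [eval_add, eval_mul, eval_C, eval_X, ← hP]
    linear_combination -hz

theorem eq_add_mul_of_leftInverse {k : ℂ → ℂ} (hh : Differentiable ℂ h)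
    (hk : Differentiable ℂ k) (hkh : LeftInverse k h) (z : ℂ) :
    h z = h 0 + z * (h 1 - h 0) := by
  obtain ⟨n, hO⟩ := exists_isBigO_pow_of_tendsto_cobounded hh
    (by simpa only [Metric.cobounded_eq_cocompact] using hkh.tendsto_cocompact hk.continuous)
  obtain ⟨P, hP⟩ := exists_polynomial_eq_of_isBigO_pow hh hO
  have hP' : ∀ z, P.derivative.eval z ≠ 0 := fun z => by
    rw [← Polynomial.deriv, ← funext hP]
    exact hkh.deriv_ne_zero (hk _) (hh z)
  rw [funext hP, eq_X_add_C_of_natDegree_le_one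
    (natDegree_le_one_of_forall_eval_derivative_ne_zero hP')]
  simp only [eval_add, eval_mul, eval_C, eval_X]
  ring

end Complex

theorem mem_puncturedProd {p : ℂ × ℂ} : p ∈ PuncturedProd ↔ p.2 ≠ 0 := by
  simp [PuncturedProd]

theorem isOpen_puncturedProd : IsOpen PuncturedProd :=
  isOpen_univ.prod isOpen_compl_singleton

section Slices

variable {E : Type*} [NormedAddCommGroup E] [NormedSpace ℂ E] {F : ℂ × ℂ → E}

theorem DifferentiableOn.differentiable_puncturedProd_slice
    (hF : DifferentiableOn ℂ F PuncturedProd) {y : ℂ} (hy : y ≠ 0) :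
    Differentiable ℂ fun x => F (x, y) := fun x =>
  (hF.differentiableAt (isOpen_puncturedProd.mem_nhds (mem_puncturedProd.2 hy))).comp x
    (differentiableAt_id.prodMk (differentiableAt_const y))

theorem DifferentiableOn.differentiableOn_puncturedProd_slice
    (hF : DifferentiableOn ℂ F PuncturedProd) (x : ℂ) :
    DifferentiableOn ℂ (fun y => F (x, y)) {0}ᶜ :=
  hF.comp ((differentiableOn_const x).prodMk differentiableOn_id) fun _ hy =>
    mem_puncturedProd.2 hy

end Slices

theorem isAutomorphismOn_shear_of_eq {f : ℂ × ℂ → ℂ} {c γ : ℂ → ℂ}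
    (hf : DifferentiableOn ℂ f PuncturedProd) (hc : DifferentiableOn ℂ c {0}ᶜ)
    (hc0 : ∀ y, y ≠ 0 → c y ≠ 0) (hγ : DifferentiableOn ℂ γ {0}ᶜ)
    (hfcγ : ∀ x y, y ≠ 0 → f (x, y) = x * (1 - c y) - γ y) :
    IsAutomorphismOn PuncturedProd (fun p => (p.1 - f p, p.2)) := by
  have hsnd : MapsTo Prod.snd PuncturedProd {0}ᶜ := fun _ hp => hp.2
  have hcD : DifferentiableOn ℂ (fun p : ℂ × ℂ => c p.2) PuncturedProd :=
    hc.comp differentiableOn_snd hsnd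
  have hγD : DifferentiableOn ℂ (fun p : ℂ × ℂ => γ p.2) PuncturedProd :=
    hγ.comp differentiableOn_snd hsnd
  have hinv : DifferentiableOn ℂ (fun p : ℂ × ℂ => (p.1 - γ p.2) * (c p.2)⁻¹) PuncturedProd :=
    (differentiableOn_fst.sub hγD).mul (hcD.inv fun _ hp => hc0 _ (hsnd hp))
  refine ⟨(differentiableOn_fst.sub hf).prodMk differentiableOn_snd, fun _ hp => hp,
    fun p => ((p.1 - γ p.2) * (c p.2)⁻¹, p.2), hinv.prodMk differentiableOn_snd, fun _ hp => hp,
    fun ⟨x, y⟩ hp => Prod.ext ?_ rfl, fun ⟨x, y⟩ hp => Prod.ext ?_ rfl⟩ <;>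
  · have hcy := hc0 y hp.2
    dsimp only
    rw [hfcγ _ y hp.2]
    field_simp
    ring

/-- For a holomorphic `f : ℂ × ℂ∗ → ℂ`, the map `(x, y) ↦ (x − f(x, y), y)` is an automorphism
of `ℂ × ℂ∗` if and only if `f(x, y) = x·(1 − c(y)) − γ(y)` for some holomorphic
nowhere-vanishing `c : ℂ∗ → ℂ∗` and holomorphic `γ : ℂ∗ → ℂ`. -/
theorem shear_automorphism_characterization
    (f : ℂ × ℂ → ℂ) (hf : DifferentiableOn ℂ f PuncturedProd) :
    IsAutomorphismOn PuncturedProd (fun p => (p.1 - f p, p.2)) ↔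
    ∃ c γ : ℂ → ℂ, DifferentiableOn ℂ c {(0 : ℂ)}ᶜ ∧ (∀ y : ℂ, y ≠ 0 → c y ≠ 0) ∧
      DifferentiableOn ℂ γ {(0 : ℂ)}ᶜ ∧
      ∀ x y : ℂ, y ≠ 0 → f (x, y) = x * (1 - c y) - γ y := by
  refine ⟨?_, fun ⟨c, γ, hc, hc0, hγ, hfcγ⟩ => isAutomorphismOn_shear_of_eq hf hc hc0 hγ hfcγ⟩
  rintro ⟨-, -, g, hg, -, hgf, -⟩
  have hslice : ∀ y ≠ 0, LeftInverse (fun x => (g (x, y)).1) (fun x => x - f (x, y)) :=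
    fun y hy x => congrArg Prod.fst (hgf (x, y) (mem_puncturedProd.2 hy))
  have haffine : ∀ y ≠ 0, ∀ x,
      x - f (x, y) = 0 - f (0, y) + x * (1 - f (1, y) - (0 - f (0, y))) := fun y hy =>
    Complex.eq_add_mul_of_leftInverse
      (differentiable_id.sub (hf.differentiable_puncturedProd_slice hy))
      (hg.differentiable_puncturedProd_slice hy).fst (hslice y hy)
  refine ⟨fun y => 1 - f (1, y) + f (0, y), fun y => -f (0, y),
    ((differentiableOn_const 1).sub (hf.differentiableOn_puncturedProd_slice 1)).add
      (hf.differentiableOn_puncturedProd_slice 0),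
    fun y hy hc => ?_, (hf.differentiableOn_puncturedProd_slice 0).neg,
    fun x y hy => by linear_combination -haffine y hy x⟩
  exact one_ne_zero <| (hslice y hy).injective (by linear_combination hc)
end
end

section
/- Let α, β : ℂ × 𝔾₂ → ℂ be holomorphic, and let E : ℂ → ℂ be the entire function with w·E(w) = exp(w) − 1 and E(0) = 1. Define b : Ω → ℂ by b(x) := −x₁₁ · α(x₁₂, tr x, det x) · E(x₁₂ · α(x₁₂, tr x, det x)) + β(x₁₂, tr x, det x). Then b is holomorphic on Ω and the triangular conjugation T_b : x ↦ t(x) x t(x)⁻¹, where t(x) is the lower-triangular matrix with rows (1, 0) and (b(x), 1), is an automorphism of Ω. -/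
open Matrix Set

attribute [local instance] Matrix.normedAddCommGroup Matrix.normedSpace

noncomputable section

/-- The lower triangular matrix with rows `(1, 0)` and `(b, 1)`. -/
def TriMat (b : ℂ) : M2 := !![1, 0; b, 1]

/-- The symmetrized bidisc `𝔾₂`. -/
def SymBidisc : Set (ℂ × ℂ) :=
  {p | ∃ z w : ℂ, ‖z‖ < 1 ∧ ‖w‖ < 1 ∧ p = (z + w, z * w)}

/-!
Conjugation by `t(c) = !![1, 0; c, 1]` preserves the spectrum, the trace, the determinant and
the entry `x₁₂`, and replaces `x₁₁` by `x₁₁ - c x₁₂`; moreover `t(a) t(c) = t(a + c)`. Hence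
`T_b` maps the spectral ball to itself, and it is inverted by `T_{b'}` as soon as
`b' (T_b x) = -b x` and `b (T_{b'} y) = -b' y`. For the given `b` both identities hold for
`b' y = exp (-y₁₂ α) (y₁₁ α E(y₁₂ α) - β)`, by `w E(w) = exp w - 1`. That `(tr x, det x)` lies
in `𝔾₂` comes from writing it as `(z + w, z w)` with `z, w` the two eigenvalues of `x`.
-/
lemma differentiableOn_matrix_mul {X : Type*} [NormedAddCommGroup X] [NormedSpace ℂ X]
    {l m n : Type*} [Fintype l] [Fintype m] [Fintype n] {f : X → Matrix l m ℂ}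
    {g : X → Matrix m n ℂ} {s : Set X}
    (hf : DifferentiableOn ℂ f s) (hg : DifferentiableOn ℂ g s) :
    DifferentiableOn ℂ (fun x => f x * g x) s := by
  refine differentiableOn_pi.2 fun i => differentiableOn_pi.2 fun j => ?_
  simp only [Matrix.mul_apply]
  exact DifferentiableOn.fun_sum fun k _ =>
    (differentiableOn_pi.1 (differentiableOn_pi.1 hf i) k).fun_mul
      (differentiableOn_pi.1 (differentiableOn_pi.1 hg k) j)

lemma triMat_eq_one_add_smul (c : ℂ) : TriMat c = 1 + c • !![0, 0; 1, 0] := by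
  ext i j; fin_cases i <;> fin_cases j <;> simp [TriMat]

lemma differentiable_triMat : Differentiable ℂ TriMat := by
  rw [funext triMat_eq_one_add_smul]; fun_prop

lemma triMat_add (a c : ℂ) : TriMat (a + c) = TriMat a * TriMat c := by
  simp [TriMat]

lemma triMat_zero : TriMat 0 = 1 := by simp [TriMat, Matrix.one_fin_two]

lemma triMat_inv (c : ℂ) : (TriMat c)⁻¹ = TriMat (-c) :=
  Matrix.inv_eq_right_inv (by rw [← triMat_add, add_neg_cancel, triMat_zero])

lemma isUnit_triMat (c : ℂ) : IsUnit (TriMat c) :=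
  IsUnit.of_mul_eq_one _ (by rw [← triMat_add, add_neg_cancel, triMat_zero])

def triConj (c : ℂ) (x : M2) : M2 := TriMat c * x * (TriMat c)⁻¹

lemma triConj_zero (x : M2) : triConj 0 x = x := by simp [triConj, triMat_zero]

lemma triConj_triConj (a c : ℂ) (x : M2) : triConj a (triConj c x) = triConj (a + c) x := by
  rw [triConj, triConj, triConj, triMat_add, Matrix.mul_inv_rev]
  simp only [Matrix.mul_assoc]

lemma triConj_apply_zero_zero (c : ℂ) (x : M2) : triConj c x 0 0 = x 0 0 - c * x 0 1 := by
  rw [triConj, triMat_inv, Matrix.eta_fin_two x]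
  simp [TriMat, sub_eq_add_neg, mul_comm]

lemma triConj_apply_zero_one (c : ℂ) (x : M2) : triConj c x 0 1 = x 0 1 := by
  rw [triConj, triMat_inv, Matrix.eta_fin_two x]
  simp [TriMat]

lemma trace_triConj (c : ℂ) (x : M2) : (triConj c x).trace = x.trace :=
  Matrix.trace_conj (isUnit_triMat c) x

lemma det_triConj (c : ℂ) (x : M2) : (triConj c x).det = x.det :=
  Matrix.det_conj (isUnit_triMat c) x

lemma spectrum_triConj (c : ℂ) (x : M2) : spectrum ℂ (triConj c x) = spectrum ℂ x := by
  rw [triConj, ← (isUnit_triMat c).unit_spec, ← Matrix.coe_units_inv, spectrum.units_conjugate]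

lemma differentiableOn_triConj {c : M2 → ℂ} {s : Set M2} (hc : DifferentiableOn ℂ c s) :
    DifferentiableOn ℂ (fun x => triConj (c x) x) s := by
  simp only [triConj, triMat_inv]
  have hT := differentiable_triMat.comp_differentiableOn hc
  exact differentiableOn_matrix_mul (differentiableOn_matrix_mul hT differentiableOn_id)
    (differentiable_triMat.comp_differentiableOn hc.neg)

lemma exists_spectrum_add_mul {K : Type*} [Field K] [IsAlgClosed K]
    (x : Matrix (Fin 2) (Fin 2) K) :
    ∃ z ∈ spectrum K x, ∃ w ∈ spectrum K x, z + w = x.trace ∧ z * w = x.det := by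
  have hroot : ∀ z, z ∈ spectrum K x ↔ z ^ 2 - x.trace * z + x.det = 0 := fun z => by
    rw [Matrix.mem_spectrum_iff_isRoot_charpoly, Matrix.charpoly_fin_two]
    simp only [Polynomial.IsRoot.def, Polynomial.eval_add, Polynomial.eval_sub,
      Polynomial.eval_pow, Polynomial.eval_mul, Polynomial.eval_X, Polynomial.eval_C]
  have hdeg : x.charpoly.degree ≠ 0 := by rw [Matrix.charpoly_degree_eq_dim]; simp
  obtain ⟨z, hz⟩ := IsAlgClosed.exists_root x.charpoly hdeg
  rw [← Matrix.mem_spectrum_iff_isRoot_charpoly, hroot] at hz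
  refine ⟨z, (hroot z).2 hz, x.trace - z, (hroot _).2 ?_, by ring, ?_⟩
  · linear_combination hz
  · linear_combination -hz

lemma SpectralBall.mapsTo_triConj (c : ℂ) : MapsTo (triConj c) SpectralBall SpectralBall :=
  fun x hx => by simpa only [SpectralBall, Set.mem_ofPred_eq, spectrum_triConj] using hx

lemma SpectralBall.trace_det_mem {x : M2} (hx : x ∈ SpectralBall) :
    (x.trace, x.det) ∈ SymBidisc := by
  obtain ⟨z, hz, w, hw, hsum, hprod⟩ := exists_spectrum_add_mul x
  exact ⟨z, w, hx z hz, hx w hw, by rw [hsum, hprod]⟩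

lemma isAutomorphismOn_triConj {D : Set M2} (hD : ∀ c, MapsTo (triConj c) D D)
    {c d : M2 → ℂ} (hc : DifferentiableOn ℂ c D) (hd : DifferentiableOn ℂ d D)
    (hdc : ∀ x ∈ D, d (triConj (c x) x) = -c x) (hcd : ∀ y ∈ D, c (triConj (d y) y) = -d y) :
    IsAutomorphismOn D (fun x => triConj (c x) x) :=
  ⟨differentiableOn_triConj hc, fun x hx => hD _ hx, fun y => triConj (d y) y,
    differentiableOn_triConj hd, fun y hy => hD _ hy,
    fun x hx => by dsimp only; rw [hdc x hx, triConj_triConj, neg_add_cancel, triConj_zero],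
    fun y hy => by dsimp only; rw [hcd y hy, triConj_triConj, neg_add_cancel, triConj_zero]⟩

def triInvariants (x : M2) : ℂ × ℂ × ℂ := (x 0 1, x.trace, x.det)

lemma triInvariants_triConj (c : ℂ) (x : M2) :
    triInvariants (triConj c x) = triInvariants x := by
  simp only [triInvariants, triConj_apply_zero_one, trace_triConj, det_triConj]

lemma differentiable_triInvariants : Differentiable ℂ triInvariants := by
  unfold triInvariants
  simp only [Matrix.trace_fin_two, Matrix.det_fin_two]
  fun_prop

lemma SpectralBall.mapsTo_triInvariants : MapsTo triInvariants SpectralBall (univ ×ˢ SymBidisc) :=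
  fun _ hx => ⟨mem_univ _, SpectralBall.trace_det_mem hx⟩

section TriCoeff

variable (α β : ℂ × ℂ × ℂ → ℂ) (E : ℂ → ℂ)

def triCoeff (x : M2) : ℂ :=
  -(x 0 0) * α (triInvariants x) * E (x 0 1 * α (triInvariants x)) + β (triInvariants x)

def triCoeffInv (y : M2) : ℂ :=
  Complex.exp (-(y 0 1 * α (triInvariants y))) *
    (y 0 0 * α (triInvariants y) * E (y 0 1 * α (triInvariants y)) - β (triInvariants y))

variable {α β E}

lemma triCoeffInv_triConj_triCoeff (hE : ∀ w : ℂ, w * E w = Complex.exp w - 1) (x : M2) :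
    triCoeffInv α β E (triConj (triCoeff α β E x) x) = -triCoeff α β E x := by
  set b := triCoeff α β E x with hb
  unfold triCoeff at hb
  rw [triCoeffInv, triInvariants_triConj, triConj_apply_zero_zero, triConj_apply_zero_one,
    Complex.exp_neg, inv_mul_eq_iff_eq_mul₀ (Complex.exp_ne_zero _)]
  linear_combination (-b) * hE (x 0 1 * α (triInvariants x)) + hb

lemma triCoeff_triConj_triCoeffInv (hE : ∀ w : ℂ, w * E w = Complex.exp w - 1) (y : M2) :
    triCoeff α β E (triConj (triCoeffInv α β E y) y) = -triCoeffInv α β E y := by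
  set b' := triCoeffInv α β E y with hb'
  have hb'exp : b' * Complex.exp (y 0 1 * α (triInvariants y))
      = y 0 0 * α (triInvariants y) * E (y 0 1 * α (triInvariants y)) - β (triInvariants y) := by
    rw [hb', triCoeffInv, Complex.exp_neg, mul_comm, ← mul_assoc, mul_inv_cancel₀
      (Complex.exp_ne_zero _), one_mul]
  rw [triCoeff, triInvariants_triConj, triConj_apply_zero_zero, triConj_apply_zero_one]
  linear_combination b' * hE (y 0 1 * α (triInvariants y)) + hb'exp

variable (hα : DifferentiableOn ℂ α (univ ×ˢ SymBidisc))
  (hβ : DifferentiableOn ℂ β (univ ×ˢ SymBidisc)) (hE : Differentiable ℂ E)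
include hα hβ hE

lemma differentiableOn_triCoeff : DifferentiableOn ℂ (triCoeff α β E) SpectralBall := by
  have := differentiable_triInvariants
  unfold triCoeff
  fun_prop (disch := exact SpectralBall.mapsTo_triInvariants)

lemma differentiableOn_triCoeffInv : DifferentiableOn ℂ (triCoeffInv α β E) SpectralBall := by
  have := differentiable_triInvariants
  unfold triCoeffInv
  fun_prop (disch := exact SpectralBall.mapsTo_triInvariants)

end TriCoeff

theorem triangular_conjugation_is_automorphism_general
    (α β : ℂ × ℂ × ℂ → ℂ)
    (hα : DifferentiableOn ℂ α (Set.univ ×ˢ SymBidisc))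
    (hβ : DifferentiableOn ℂ β (Set.univ ×ˢ SymBidisc))
    (E : ℂ → ℂ) (hE : Differentiable ℂ E)
    (hEeq : ∀ w : ℂ, w * E w = Complex.exp w - 1)
    (b : M2 → ℂ)
    (hbdef : ∀ x : M2, b x =
      -(x 0 0) * α (x 0 1, x.trace, x.det) * E (x 0 1 * α (x 0 1, x.trace, x.det))
        + β (x 0 1, x.trace, x.det)) :
    DifferentiableOn ℂ b SpectralBall ∧
    IsAutomorphismOn SpectralBall
      (fun x => TriMat (b x) * x * (TriMat (b x))⁻¹) := by
  obtain rfl : b = triCoeff α β E := funext hbdef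
  exact ⟨differentiableOn_triCoeff hα hβ hE,
    isAutomorphismOn_triConj SpectralBall.mapsTo_triConj
      (differentiableOn_triCoeff hα hβ hE) (differentiableOn_triCoeffInv hα hβ hE)
      (fun x _ => triCoeffInv_triConj_triCoeff hEeq x)
      (fun y _ => triCoeff_triConj_triCoeffInv hEeq y)⟩

/-- Given holomorphic `α, β : ℂ × 𝔾₂ → ℂ` and the entire function `E` with
`w E(w) = exp(w) − 1`, `E(0) = 1`, the function
`b(x) = −x₁₁ α(x₁₂, tr x, det x) E(x₁₂ α(x₁₂, tr x, det x)) + β(x₁₂, tr x, det x)`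
is holomorphic on the spectral ball and the triangular conjugation `T_b` is an automorphism
of the spectral ball. -/
theorem triangular_conjugation_is_automorphism
    (α β : ℂ × ℂ × ℂ → ℂ)
    (hα : DifferentiableOn ℂ α (Set.univ ×ˢ SymBidisc))
    (hβ : DifferentiableOn ℂ β (Set.univ ×ˢ SymBidisc))
    (E : ℂ → ℂ) (hE : Differentiable ℂ E)
    (hEeq : ∀ w : ℂ, w * E w = Complex.exp w - 1) (hE0 : E 0 = 1)
    (b : M2 → ℂ)
    (hbdef : ∀ x : M2, b x =
      -(x 0 0) * α (x 0 1, x.trace, x.det) * E (x 0 1 * α (x 0 1, x.trace, x.det))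
        + β (x 0 1, x.trace, x.det)) :
    DifferentiableOn ℂ b SpectralBall ∧
    IsAutomorphismOn SpectralBall
      (fun x => TriMat (b x) * x * (TriMat (b x))⁻¹) :=
  triangular_conjugation_is_automorphism_general α β hα hβ E hE hEeq b hbdef
end
end

section
/- Let n ≥ 1 and let u : Ω_n → GL_n(ℂ) be a holomorphic map which is conjugate invariant, i.e. u(q⁻¹ x q) = u(x) for every x ∈ Ω_n and every q ∈ GL_n(ℂ) with q⁻¹ x q ∈ Ω_n. Then the conjugation 𝒥_u : x ↦ u(x)⁻¹ · x · u(x) is an automorphism of Ω_n. -/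
open Matrix Set

attribute [local instance] Matrix.normedAddCommGroup Matrix.normedSpace

noncomputable section

/-- The spectral ball of `n × n` complex matrices: those whose spectral radius (the maximum
modulus of the eigenvalues) is less than `1`. -/
def SpectralBallN (n : ℕ) : Set (Matrix (Fin n) (Fin n) ℂ) :=
  {x | ∀ z ∈ spectrum ℂ x, ‖z‖ < 1}

/-! The entrywise sup norm on matrices is not submultiplicative, but differentiability only
depends on the topology, which the operator norm `Matrix.linftyOpNormedRing` shares; so the
calculus of normed algebras applies. -/

section Calculus

variable {𝕜 : Type*} [NontriviallyNormedField 𝕜] {m : Type*} [Fintype m]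
  {E : Type*} [NormedAddCommGroup E] [NormedSpace 𝕜 E] {s : Set E} {x : E}
  {f g : E → Matrix m m 𝕜}

theorem DifferentiableWithinAt.matrix_mul (hf : DifferentiableWithinAt 𝕜 f s x)
    (hg : DifferentiableWithinAt 𝕜 g s x) :
    DifferentiableWithinAt 𝕜 (fun y => f y * g y) s x := by
  classical
  let := Matrix.linftyOpNormedRing (n := m) (α := 𝕜)
  let := Matrix.linftyOpNormedAlgebra (R := 𝕜) (n := m) (α := 𝕜)
  exact hf.mul hg

variable [DecidableEq m] [CompleteSpace 𝕜]

theorem DifferentiableWithinAt.matrix_inv (hf : DifferentiableWithinAt 𝕜 f s x)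
    (hx : IsUnit (f x)) : DifferentiableWithinAt 𝕜 (fun y => (f y)⁻¹) s x := by
  let R := Matrix.linftyOpNormedRing (n := m) (α := 𝕜)
  let := Matrix.linftyOpNormedAlgebra (R := 𝕜) (n := m) (α := 𝕜)
  have : @CompleteSpace _ R.toUniformSpace := FiniteDimensional.complete 𝕜 _
  simp_rw [Matrix.nonsing_inv_eq_ringInverse]
  exact hf.inverse hx

theorem DifferentiableOn.matrix_inv (hf : DifferentiableOn 𝕜 f s) (hs : ∀ x ∈ s, IsUnit (f x)) :
    DifferentiableOn 𝕜 (fun y => (f y)⁻¹) s :=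
  fun x hx => (hf x hx).matrix_inv (hs x hx)

end Calculus

section Conjugation

variable {m : Type*} [Fintype m] [DecidableEq m]

theorem Matrix.mul_conj_nonsing_inv {α : Type*} [CommRing α] {q : Matrix m m α} (hq : IsUnit q)
    (x : Matrix m m α) : q * (q⁻¹ * x * q) * q⁻¹ = x := by
  have hdet := (Matrix.isUnit_iff_isUnit_det q).mp hq
  simp only [mul_assoc, Matrix.mul_nonsing_inv_cancel_left _ _ hdet, Matrix.mul_nonsing_inv _ hdet,
    mul_one]

/-- The conjugation `𝒥_u : x ↦ u(x)⁻¹ x u(x)`. -/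
def conjMap {α : Type*} [CommRing α] (u : Matrix m m α → Matrix m m α) (x : Matrix m m α) :
    Matrix m m α :=
  (u x)⁻¹ * x * u x

variable {D : Set (Matrix m m ℂ)} {u : Matrix m m ℂ → Matrix m m ℂ}

theorem differentiableOn_conjMap (hu : DifferentiableOn ℂ u D) (hinv : ∀ x ∈ D, IsUnit (u x)) :
    DifferentiableOn ℂ (conjMap u) D := fun x hx =>
  (((hu x hx).matrix_inv (hinv x hx)).matrix_mul differentiableWithinAt_id).matrix_mul (hu x hx)

theorem mapsTo_conjMap (hD : ∀ x ∈ D, ∀ q, IsUnit q → q⁻¹ * x * q ∈ D)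
    (hinv : ∀ x ∈ D, IsUnit (u x)) : MapsTo (conjMap u) D D :=
  fun x hx => hD x hx (u x) (hinv x hx)

/-- The inverse is `𝒥_{u⁻¹}`: by invariance `u (𝒥_u x) = u x = u (𝒥_{u⁻¹} x)`, so the two
maps conjugate by mutually inverse matrices. -/
theorem isAutomorphismOn_conjMap (hD : ∀ x ∈ D, ∀ q, IsUnit q → q⁻¹ * x * q ∈ D)
    (hu : DifferentiableOn ℂ u D) (hinv : ∀ x ∈ D, IsUnit (u x))
    (hconj : ∀ x ∈ D, ∀ q, IsUnit q → u (q⁻¹ * x * q) = u x) :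
    IsAutomorphismOn D (conjMap u) := by
  have hinv' : ∀ x ∈ D, IsUnit (u x)⁻¹ := fun x hx => isUnit_nonsing_inv_iff.mpr (hinv x hx)
  refine ⟨differentiableOn_conjMap hu hinv, mapsTo_conjMap hD hinv,
    conjMap fun x => (u x)⁻¹, differentiableOn_conjMap (hu.matrix_inv hinv) hinv',
    mapsTo_conjMap hD hinv', fun x hx => ?_, fun x hx => ?_⟩
  · simp only [conjMap, hconj x hx _ (hinv x hx)]
    rw [nonsing_inv_nonsing_inv _ ((isUnit_iff_isUnit_det _).mp (hinv x hx))]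
    exact mul_conj_nonsing_inv (hinv x hx) x
  · simp only [conjMap, hconj x hx _ (hinv' x hx)]
    simpa only [nonsing_inv_nonsing_inv _ ((isUnit_iff_isUnit_det _).mp (hinv x hx))] using
      mul_conj_nonsing_inv (hinv' x hx) x

end Conjugation

theorem conj_mem_spectralBallN {n : ℕ} {x q : Matrix (Fin n) (Fin n) ℂ} (hq : IsUnit q)
    (hx : x ∈ SpectralBallN n) : q⁻¹ * x * q ∈ SpectralBallN n := by
  intro z hz
  apply hx
  rwa [show q⁻¹ * x * q = ↑hq.unit⁻¹ * x * ↑hq.unit by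
        rw [Matrix.coe_units_inv, IsUnit.unit_spec],
      spectrum.units_conjugate'] at hz

theorem conjugation_by_invariant_map_is_automorphism_general
    (n : ℕ)
    (u : Matrix (Fin n) (Fin n) ℂ → Matrix (Fin n) (Fin n) ℂ)
    (hu : DifferentiableOn ℂ u (SpectralBallN n))
    (huinv : ∀ x ∈ SpectralBallN n, IsUnit (u x))
    (hconj : ∀ x ∈ SpectralBallN n, ∀ q : Matrix (Fin n) (Fin n) ℂ, IsUnit q →
      q⁻¹ * x * q ∈ SpectralBallN n → u (q⁻¹ * x * q) = u x) :
    IsAutomorphismOn (SpectralBallN n) (fun x => (u x)⁻¹ * x * u x) :=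
  isAutomorphismOn_conjMap (fun _ hx _ hq => conj_mem_spectralBallN hq hx) hu huinv
    fun x hx q hq => hconj x hx q hq (conj_mem_spectralBallN hq hx)

/-- If `u` is a conjugate invariant holomorphic map on the spectral ball with invertible
values, then the conjugation `𝒥_u : x ↦ u(x)⁻¹ x u(x)` is an automorphism of the spectral
ball. -/
theorem conjugation_by_invariant_map_is_automorphism
    (n : ℕ) (hn : 1 ≤ n)
    (u : Matrix (Fin n) (Fin n) ℂ → Matrix (Fin n) (Fin n) ℂ)
    (hu : DifferentiableOn ℂ u (SpectralBallN n))
    (huinv : ∀ x ∈ SpectralBallN n, IsUnit (u x))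
    (hconj : ∀ x ∈ SpectralBallN n, ∀ q : Matrix (Fin n) (Fin n) ℂ, IsUnit q →
      q⁻¹ * x * q ∈ SpectralBallN n → u (q⁻¹ * x * q) = u x) :
    IsAutomorphismOn (SpectralBallN n) (fun x => (u x)⁻¹ * x * u x) :=
  conjugation_by_invariant_map_is_automorphism_general n u hu huinv hconj
end
end

section
/- Let n ≥ 1, α ∈ ℂ with |α| < 1, and γ ∈ ℂ with |γ| = 1. Then for every x ∈ Ω_n the matrix I − \bar{α}·x is invertible, and the Möbius map m_{α,γ} : x ↦ γ · (x − α·I) · (I − \bar{α}·x)⁻¹ is an automorphism of Ω_n. -/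
open Matrix Set

attribute [local instance] Matrix.normedAddCommGroup Matrix.normedSpace

noncomputable section

/-!
Writing `u = 1 - ᾱ x`, one has `z - m_{α,γ}(x) = ((z + γα) - (zᾱ + γ) x) u⁻¹`, and the scalar
identity `|z + γα|² - |zᾱ + γ|² = (|z|² - 1)(1 - |α|²)` shows that for `|z| ≥ 1` the first factor
is a nonzero multiple of `w - x` with `|w| ≥ 1`, hence invertible. So `m_{α,γ}` maps the spectral
ball into itself, purely algebraically, in any complex algebra; its inverse is the Möbius map
`m_{-αγ, γ̄}`. Holomorphy comes from Cramer's rule, the inverse being `det⁻¹ • adjugate`.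
-/

open ComplexConjugate

theorem Complex.normSq_add_mul_sub_normSq_mul_conj_add {γ : ℂ} (hγ : normSq γ = 1) (z α : ℂ) :
    normSq (z + γ * α) - normSq (z * conj α + γ) = (normSq z - 1) * (1 - normSq α) := by
  have hre : (z * conj (γ * α)).re = (z * conj α * conj γ).re := by
    rw [map_mul]
    ring_nf
  simp only [normSq_add, normSq_mul, normSq_conj, hγ, hre]
  ring

theorem Complex.norm_mul_conj_add_le {z α γ : ℂ} (hz : 1 ≤ ‖z‖) (hα : ‖α‖ ≤ 1) (hγ : ‖γ‖ = 1) :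
    ‖z * conj α + γ‖ ≤ ‖z + γ * α‖ := by
  have key := normSq_add_mul_sub_normSq_mul_conj_add (by rw [normSq_eq_norm_sq, hγ, one_pow]) z α
  simp only [normSq_eq_norm_sq] at key
  have : 0 ≤ (‖z‖ ^ 2 - 1) * (1 - ‖α‖ ^ 2) := by
    apply mul_nonneg <;> nlinarith [norm_nonneg α]
  exact (pow_le_pow_iff_left₀ (norm_nonneg _) (norm_nonneg _) two_ne_zero).1 (by linarith)

theorem IsUnit.smul_of_ne_zero {K A : Type*} [Field K] [Ring A] [Algebra K A] {c : K}
    (hc : c ≠ 0) {v : A} (hv : IsUnit v) : IsUnit (c • v) := by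
  rw [Algebra.smul_def]
  exact (hc.isUnit.map _).mul hv

section SpectralBall

variable {A : Type*} [Ring A] [Algebra ℂ A]

variable (A) in
def spectralBall : Set A :=
  {x | ∀ z ∈ spectrum ℂ x, ‖z‖ < 1}

theorem isUnit_smul_one_sub_smul_of_mem_spectralBall {x : A} (hx : x ∈ spectralBall A)
    {a b : ℂ} (ha : a ≠ 0) (hab : ‖b‖ ≤ ‖a‖) : IsUnit (a • 1 - b • x) := by
  rcases eq_or_ne b 0 with rfl | hb
  · simpa using isUnit_one.smul_of_ne_zero ha
  have hnot : a / b ∉ spectrum ℂ x := fun h => by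
    have := hx _ h
    rw [norm_div, div_lt_one (norm_pos_iff.2 hb)] at this
    linarith
  have hfactor : a • (1 : A) - b • x = b • (algebraMap ℂ A (a / b) - x) := by
    rw [Algebra.algebraMap_eq_smul_one, smul_sub, smul_smul, mul_div_cancel₀ _ hb]
  rw [hfactor]
  exact (spectrum.notMem_iff.1 hnot).smul_of_ne_zero hb

theorem isUnit_one_sub_smul_of_mem_spectralBall {x : A} (hx : x ∈ spectralBall A) {c : ℂ}
    (hc : ‖c‖ ≤ 1) : IsUnit (1 - c • x) := by
  simpa using isUnit_smul_one_sub_smul_of_mem_spectralBall hx one_ne_zero (by simpa using hc)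

def mobius (α γ : ℂ) (x : A) : A :=
  γ • ((x - α • 1) * Ring.inverse (1 - conj α • x))

theorem algebraMap_sub_mobius (α γ z : ℂ) {x : A} (hu : IsUnit (1 - conj α • x)) :
    algebraMap ℂ A z - mobius α γ x =
      ((z + γ * α) • 1 - (z * conj α + γ) • x) * Ring.inverse (1 - conj α • x) := by
  have hnum : (z + γ * α) • (1 : A) - (z * conj α + γ) • x =
      z • (1 - conj α • x) - γ • (x - α • 1) := by
    module
  rw [hnum, sub_mul, smul_mul_assoc, Ring.mul_inverse_cancel _ hu, smul_mul_assoc,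
    Algebra.algebraMap_eq_smul_one, mobius]

theorem mobius_mem_spectralBall {α γ : ℂ} (hα : ‖α‖ < 1) (hγ : ‖γ‖ = 1) {x : A}
    (hx : x ∈ spectralBall A) : mobius α γ x ∈ spectralBall A := by
  intro z hz
  by_contra! hz1
  have hu := isUnit_one_sub_smul_of_mem_spectralBall hx (c := conj α) (by simpa using hα.le)
  have hne : z + γ * α ≠ 0 := fun h => by
    have : ‖z‖ = ‖α‖ := by rw [eq_neg_of_add_eq_zero_left h, norm_neg, norm_mul, hγ, one_mul]
    linarith
  refine spectrum.notMem_iff.2 ?_ hz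
  rw [algebraMap_sub_mobius α γ z hu]
  exact (isUnit_smul_one_sub_smul_of_mem_spectralBall hx hne
    (Complex.norm_mul_conj_add_le hz1 hα.le hγ)).mul hu.ringInverse

theorem mobius_neg_mul_conj_mobius {α γ : ℂ} (hα : ‖α‖ ≠ 1) (hγ : ‖γ‖ = 1) {x : A}
    (hu : IsUnit (1 - conj α • x)) : mobius (-(α * γ)) (conj γ) (mobius α γ x) = x := by
  set u := 1 - conj α • x
  set w : A := (1 - α * conj α) • Ring.inverse u
  have hγγ : conj γ * γ = 1 := by
    rw [mul_comm, Complex.mul_conj', hγ]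
    norm_num
  have hαα : 1 - α * conj α ≠ 0 := by
    rw [Complex.mul_conj', sub_ne_zero]
    exact_mod_cast fun h => hα (by nlinarith [norm_nonneg α])
  have hw : IsUnit w := hu.ringInverse.smul_of_ne_zero hαα
  have hnum : mobius α γ x - (-(α * γ)) • 1 = γ • (x * w) := by
    have e : (x - α • 1) + α • u = (1 - α * conj α) • x := by
      simp only [u]
      module
    calc mobius α γ x - (-(α * γ)) • 1
        = γ • (((x - α • 1) + α • u) * Ring.inverse u) := by
          rw [add_mul, smul_mul_assoc, Ring.mul_inverse_cancel _ hu, mobius]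
          module
      _ = γ • (x * w) := by rw [e, smul_mul_assoc, mul_smul_comm]
  have hden : 1 - conj (-(α * γ)) • mobius α γ x = w := by
    have e : u + conj α • (x - α • 1) = (1 - α * conj α) • 1 := by
      simp only [u]
      module
    calc 1 - conj (-(α * γ)) • mobius α γ x
        = (u + conj α • (x - α • 1)) * Ring.inverse u := by
          rw [add_mul, Ring.mul_inverse_cancel _ hu, mobius, smul_smul, smul_mul_assoc, map_neg,
            map_mul, neg_mul, mul_assoc, hγγ, mul_one, neg_smul, sub_neg_eq_add]
      _ = w := by rw [e, smul_mul_assoc, one_mul]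
  rw [mobius, hnum, hden, smul_mul_assoc, mul_assoc, Ring.mul_inverse_cancel _ hw, mul_one,
    smul_smul, hγγ, one_smul]

theorem mobius_mobius_neg_mul_conj {α γ : ℂ} (hα : ‖α‖ ≠ 1) (hγ : ‖γ‖ = 1) {y : A}
    (hu : IsUnit (1 - conj (-(α * γ)) • y)) : mobius α γ (mobius (-(α * γ)) (conj γ) y) = y := by
  have h := mobius_neg_mul_conj_mobius (α := -(α * γ)) (γ := conj γ)
    (by rwa [norm_neg, norm_mul, hγ, mul_one]) (by rwa [Complex.norm_conj]) hu
  have hα' : -(-(α * γ) * conj γ) = α := by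
    rw [neg_mul, neg_neg, mul_assoc, Complex.mul_conj', hγ]
    norm_num
  rwa [hα', Complex.conj_conj] at h

end SpectralBall

section MatrixCalculus

variable {m 𝕜 : Type*} [Fintype m] [NontriviallyNormedField 𝕜]

theorem Matrix.differentiable_det [DecidableEq m] :
    Differentiable 𝕜 (det : Matrix m m 𝕜 → 𝕜) := by
  show Differentiable 𝕜 fun M : Matrix m m 𝕜 => M.det
  simp only [det_apply]
  fun_prop

theorem Matrix.differentiable_adjugate [DecidableEq m] :
    Differentiable 𝕜 (adjugate : Matrix m m 𝕜 → Matrix m m 𝕜) := by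
  refine differentiable_pi'' fun i => differentiable_pi'' fun j => ?_
  simp only [adjugate_apply]
  refine differentiable_det.comp (differentiable_pi'' fun k => differentiable_pi'' fun l => ?_)
  simp only [updateRow_apply]
  split_ifs <;> fun_prop

theorem Matrix.differentiableAt_inv [DecidableEq m] {A : Matrix m m 𝕜} (hA : IsUnit A) :
    DifferentiableAt 𝕜 (fun M : Matrix m m 𝕜 => M⁻¹) A := by
  simp only [inv_def, Ring.inverse_eq_inv]
  exact (differentiable_det.differentiableAt.inv ((isUnit_iff_isUnit_det A).1 hA).ne_zero).smul
    differentiable_adjugate.differentiableAt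

theorem DifferentiableAt.matrix_mul {l n E : Type*} [Fintype l] [Fintype n] [NormedAddCommGroup E]
    [NormedSpace 𝕜 E] {f : E → Matrix l m 𝕜} {g : E → Matrix m n 𝕜} {x : E}
    (hf : DifferentiableAt 𝕜 f x) (hg : DifferentiableAt 𝕜 g x) :
    DifferentiableAt 𝕜 (fun y => f y * g y) x := by
  have hf' (i k) : DifferentiableAt 𝕜 (fun y => f y i k) x :=
    differentiableAt_pi.1 (differentiableAt_pi.1 hf i) k
  have hg' (k j) : DifferentiableAt 𝕜 (fun y => g y k j) x :=
    differentiableAt_pi.1 (differentiableAt_pi.1 hg k) j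
  refine differentiableAt_pi.2 fun i => differentiableAt_pi.2 fun j => ?_
  simp only [mul_apply]
  fun_prop

theorem Matrix.mobius_eq_inv [DecidableEq m] (α γ : ℂ) :
    (mobius α γ : Matrix m m ℂ → Matrix m m ℂ) =
      fun x => γ • ((x - α • 1) * (1 - conj α • x)⁻¹) := by
  funext x
  rw [mobius, nonsing_inv_eq_ringInverse]

theorem Matrix.differentiableOn_mobius [DecidableEq m] {α : ℂ} (hα : ‖α‖ < 1) (γ : ℂ) :
    DifferentiableOn ℂ (mobius α γ) (spectralBall (Matrix m m ℂ)) := by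
  intro x hx
  have hu := isUnit_one_sub_smul_of_mem_spectralBall hx (c := conj α) (by simpa using hα.le)
  have hnum : DifferentiableAt ℂ (fun y : Matrix m m ℂ => y - α • 1) x := by fun_prop
  have hden : DifferentiableAt ℂ (fun y : Matrix m m ℂ => (1 - conj α • y)⁻¹) x :=
    (differentiableAt_inv hu).comp x (by fun_prop)
  rw [mobius_eq_inv]
  exact ((hnum.matrix_mul hden).const_smul γ).differentiableWithinAt

end MatrixCalculus

theorem mobius_map_is_automorphism_general
    (n : ℕ) (α γ : ℂ) (hα : ‖α‖ < 1) (hγ : ‖γ‖ = 1) :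
    (∀ x ∈ SpectralBallN n,
      IsUnit ((1 : Matrix (Fin n) (Fin n) ℂ) - (starRingEnd ℂ α) • x)) ∧
    IsAutomorphismOn (SpectralBallN n)
      (fun x => γ • ((x - α • (1 : Matrix (Fin n) (Fin n) ℂ)) *
        ((1 : Matrix (Fin n) (Fin n) ℂ) - (starRingEnd ℂ α) • x)⁻¹)) := by
  have hα' : ‖-(α * γ)‖ < 1 := by rwa [norm_neg, norm_mul, hγ, mul_one]
  have hγ' : ‖conj γ‖ = 1 := by rwa [Complex.norm_conj]
  have hunit {c : ℂ} (hc : ‖c‖ < 1) (x) (hx : x ∈ SpectralBallN n) : IsUnit (1 - conj c • x) :=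
    isUnit_one_sub_smul_of_mem_spectralBall hx (by simpa using hc.le)
  refine ⟨hunit hα, ?_⟩
  rw [← Matrix.mobius_eq_inv]
  exact ⟨Matrix.differentiableOn_mobius hα γ, fun x hx => mobius_mem_spectralBall hα hγ hx,
    mobius (-(α * γ)) (conj γ), Matrix.differentiableOn_mobius hα' _,
    fun x hx => mobius_mem_spectralBall hα' hγ' hx,
    fun x hx => mobius_neg_mul_conj_mobius hα.ne hγ (hunit hα x hx),
    fun x hx => mobius_mobius_neg_mul_conj hα.ne hγ (hunit hα' x hx)⟩

/-- For `|α| < 1` and `|γ| = 1`, the matrix `I − ᾱ x` is invertible for every `x` in the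
spectral ball, and the Möbius map `m_{α,γ} : x ↦ γ (x − α I)(I − ᾱ x)⁻¹` is an automorphism
of the spectral ball. -/
theorem mobius_map_is_automorphism
    (n : ℕ) (hn : 1 ≤ n) (α γ : ℂ) (hα : ‖α‖ < 1) (hγ : ‖γ‖ = 1) :
    (∀ x ∈ SpectralBallN n,
      IsUnit ((1 : Matrix (Fin n) (Fin n) ℂ) - (starRingEnd ℂ α) • x)) ∧
    IsAutomorphismOn (SpectralBallN n)
      (fun x => γ • ((x - α • (1 : Matrix (Fin n) (Fin n) ℂ)) *
        ((1 : Matrix (Fin n) (Fin n) ℂ) - (starRingEnd ℂ α) • x)⁻¹)) :=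
  mobius_map_is_automorphism_general n α γ hα hγ
end
end

section
/- Let w ∈ ℂ[x₁₁, x₁₂, x₂₁, x₂₂] be a polynomial such that x₁₂·(∂w/∂x₁₂) − x₂₁·(∂w/∂x₂₁) belongs to the subalgebra ℂ[x₁₁, x₂₂, x₁₂x₂₁] of ℂ[x₁₁, x₁₂, x₂₁, x₂₂] generated by x₁₁, x₂₂ and the product x₁₂x₂₁. Then w itself belongs to ℂ[x₁₁, x₂₂, x₁₂x₂₁], and consequently x₁₂·(∂w/∂x₁₂) − x₂₁·(∂w/∂x₂₁) = 0. -/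
/-!
The derivation `D = xᵢ ∂ᵢ - xⱼ ∂ⱼ` is diagonal in the monomial basis: it multiplies `xᵐ` by
`mᵢ - mⱼ`. The subalgebra generated by the `xₖ` (`k ≠ i, j`) and `xᵢ xⱼ` is exactly the span of
the balanced monomials (`mᵢ = mⱼ`), i.e. the kernel of `D`, while in characteristic zero `D`
takes values in the span of the unbalanced ones. Hence `D w` lies in the subalgebra only if
`D w = 0`, and then `w` has no unbalanced monomials.
-/

namespace MvPolynomial

variable {σ R : Type*}

section CommSemiring

variable [CommSemiring R]

theorem coeff_X_mul_pderiv (i : σ) (p : MvPolynomial σ R) (m : σ →₀ ℕ) :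
    coeff m (X i * pderiv i p) = m i * coeff m p := by
  induction p using induction_on' with
  | monomial s a =>
    classical
    rw [X_mul_pderiv_monomial, coeff_smul, coeff_monomial]
    split_ifs with h
    · rw [h, nsmul_eq_mul]
    · rw [smul_zero, mul_zero]
  | add p q hp hq => rw [map_add, mul_add, coeff_add, hp, hq, coeff_add, mul_add]

variable (R) in
def balancedSubalgebra (i j : σ) : Subalgebra R (MvPolynomial σ R) where
  carrier := {p | ∀ m ∈ p.support, m i = m j}
  mul_mem' {p q} hp hq m hm := by
    classical
    obtain ⟨a, ha, b, hb, rfl⟩ := Finset.mem_add.mp (support_mul p q hm)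
    simp only [Finsupp.add_apply, hp a ha, hq b hb]
  add_mem' {p q} hp hq m hm := by
    classical
    rcases Finset.mem_union.mp (support_add hm) with hm | hm
    exacts [hp m hm, hq m hm]
  algebraMap_mem' c m hm := by
    rw [algebraMap_eq, C_apply] at hm
    rw [Finset.mem_singleton.mp (support_monomial_subset hm)]
    rfl

theorem monomial_mem_adjoin_X_image_compl_union_X_mul_X {i j : σ} (hij : i ≠ j)
    {m : σ →₀ ℕ} (hm : m i = m j) (c : R) :
    monomial m c ∈ Algebra.adjoin R (X '' {i, j}ᶜ ∪ {X i * X j}) := by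
  classical
  set m' := (m.erase i).erase j
  have hm' : m' + m i • (Finsupp.single i 1 + Finsupp.single j 1) = m := by
    ext k
    by_cases hki : k = i
    · subst hki; simp [m', Finsupp.erase_ne hij, hij.symm]
    by_cases hkj : k = j
    · subst hkj; simp [m', hki, hm]
    · simp [m', Finsupp.erase_ne hki, Finsupp.erase_ne hkj, Ne.symm hki, Ne.symm hkj]
  have hsplit : monomial m c = monomial m' c * (X i * X j) ^ m i := by
    rw [X, X, monomial_mul, mul_one, monomial_pow, one_pow, monomial_mul, mul_one, hm']
  have hX : ∀ k ∈ m'.support,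
      (X k : MvPolynomial σ R) ∈ Algebra.adjoin R (X '' {i, j}ᶜ ∪ {X i * X j}) := by
    intro k hk
    simp only [m', Finsupp.support_erase, Finset.mem_erase] at hk
    exact Algebra.subset_adjoin (Or.inl (Set.mem_image_of_mem X (by simp [hk.1, hk.2.1])))
  rw [hsplit, monomial_eq]
  refine Subalgebra.mul_mem _ (Subalgebra.mul_mem _ (Subalgebra.algebraMap_mem _ c) ?_) ?_
  · exact Subalgebra.prod_mem _ fun k hk => Subalgebra.pow_mem _ (hX k hk) _
  · exact Subalgebra.pow_mem _
      (Algebra.subset_adjoin (Set.mem_union_right _ (Set.mem_singleton _))) _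

theorem adjoin_X_image_compl_union_X_mul_X {i j : σ} (hij : i ≠ j) :
    Algebra.adjoin R (X '' {i, j}ᶜ ∪ {X i * X j}) = balancedSubalgebra R i j := by
  classical
  refine le_antisymm (Algebra.adjoin_le ?_) fun p hp => ?_
  · rintro _ (⟨k, hk, rfl⟩ | rfl) m hm
    · simp only [Set.mem_compl_iff, Set.mem_insert_iff, Set.mem_singleton_iff, not_or] at hk
      rw [X] at hm
      rw [Finset.mem_singleton.mp (support_monomial_subset hm)]
      simp [hk.1, hk.2]
    · rw [X, X, monomial_mul] at hm
      rw [Finset.mem_singleton.mp (support_monomial_subset hm)]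
      simp [hij, hij.symm]
  · rw [p.as_sum]
    exact Subalgebra.sum_mem _ fun m hm =>
      monomial_mem_adjoin_X_image_compl_union_X_mul_X hij (hp m hm) _

end CommSemiring

section CommRing

variable [CommRing R] {i j : σ} {p : MvPolynomial σ R}

theorem coeff_X_mul_pderiv_sub_X_mul_pderiv (m : σ →₀ ℕ) :
    coeff m (X i * pderiv i p - X j * pderiv j p) = ((m i : R) - m j) * coeff m p := by
  rw [coeff_sub, coeff_X_mul_pderiv, coeff_X_mul_pderiv, sub_mul]

theorem X_mul_pderiv_sub_X_mul_pderiv_eq_zero (hp : p ∈ balancedSubalgebra R i j) :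
    X i * pderiv i p - X j * pderiv j p = 0 := by
  ext m
  rw [coeff_X_mul_pderiv_sub_X_mul_pderiv, coeff_zero]
  by_cases hm : m ∈ p.support
  · rw [hp m hm, sub_self, zero_mul]
  · rw [notMem_support_iff.mp hm, mul_zero]

theorem mem_balancedSubalgebra_of_X_mul_pderiv_sub_X_mul_pderiv_mem
    [CharZero R] [NoZeroDivisors R]
    (h : X i * pderiv i p - X j * pderiv j p ∈ balancedSubalgebra R i j) :
    p ∈ balancedSubalgebra R i j := by
  intro m hm
  by_contra hne
  refine hne (h m ?_)
  rw [mem_support_iff, coeff_X_mul_pderiv_sub_X_mul_pderiv]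
  exact mul_ne_zero (sub_ne_zero.mpr (Nat.cast_injective.ne hne)) (mem_support_iff.mp hm)

end CommRing

end MvPolynomial

open MvPolynomial

/-- If `x₁₂ ∂w/∂x₁₂ − x₂₁ ∂w/∂x₂₁` lies in the subalgebra `ℂ[x₁₁, x₂₂, x₁₂x₂₁]`, then `w`
itself lies in `ℂ[x₁₁, x₂₂, x₁₂x₂₁]` and consequently `x₁₂ ∂w/∂x₁₂ − x₂₁ ∂w/∂x₂₁ = 0`. Here
the variables are indexed so that `X 0 = x₁₁`, `X 1 = x₁₂`, `X 2 = x₂₁`, `X 3 = x₂₂`. -/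
theorem mem_subalgebra_of_euler_field
    (w : MvPolynomial (Fin 4) ℂ)
    (h : X 1 * pderiv 1 w - X 2 * pderiv 2 w ∈
      Algebra.adjoin ℂ ({X 0, X 3, X 1 * X 2} : Set (MvPolynomial (Fin 4) ℂ))) :
    w ∈ Algebra.adjoin ℂ ({X 0, X 3, X 1 * X 2} : Set (MvPolynomial (Fin 4) ℂ)) ∧
      X 1 * pderiv 1 w - X 2 * pderiv 2 w = 0 := by
  have hcompl : ({1, 2}ᶜ : Set (Fin 4)) = {0, 3} := by
    ext k; fin_cases k <;> simp
  have hgens : ({X 0, X 3, X 1 * X 2} : Set (MvPolynomial (Fin 4) ℂ)) =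
      X '' {1, 2}ᶜ ∪ {X 1 * X 2} := by
    rw [hcompl, Set.image_insert_eq, Set.image_singleton, Set.insert_union, Set.singleton_union]
  rw [hgens, adjoin_X_image_compl_union_X_mul_X (by decide)] at h ⊢
  have hw := mem_balancedSubalgebra_of_X_mul_pderiv_sub_X_mul_pderiv_mem h
  exact ⟨hw, X_mul_pderiv_sub_X_mul_pderiv_eq_zero hw⟩
end

section
/- Consider the Lie algebra of ℂ-linear derivations of the polynomial ring R = ℂ[x₁₁, x₁₂, x₂₁, x₂₂] under the commutator bracket, and let 𝒮 be the set of derivations of the following five forms: (i) a·(x₁₂·∂/∂x₁₂ − x₂₁·∂/∂x₂₁) with a ∈ ℂ[x₁₁, x₂₂, x₁₂x₂₁]; (ii) β·(−x₁₂·∂/∂x₁₁ + (x₁₁ − x₂₂)·∂/∂x₂₁ + x₁₂·∂/∂x₂₂) with β ∈ ℂ[x₁₂, x₁₁+x₂₂, x₁₁x₂₂−x₁₂x₂₁]; (iii) x₁₁·α·(x₁₂·∂/∂x₁₁ − (x₁₁ − x₂₂)·∂/∂x₂₁ − x₁₂·∂/∂x₂₂) with α ∈ ℂ[x₁₂, x₁₁+x₂₂,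 x₁₁x₂₂−x₁₂x₂₁]; (iv) and (v) the derivations obtained from those in (ii) and (iii) by interchanging the variables x₁₂ and x₂₁ everywhere. Then every derivation X = v₁·∂/∂x₁₁ + v₂·∂/∂x₁₂ + v₃·∂/∂x₂₁ + v₄·∂/∂x₂₂ with polynomial coefficients v₁, v₂, v₃, v₄ ∈ R satisfying X(x₁₁ + x₂₂) = 0 and X(x₁₁x₂₂ − x₁₂x₂₁) = 0 belongs to the Lie subalgebra of derivations of R generated by 𝒮. -/
/-!
Let `H`, `F`, `G` (`diagField`, `lowerField`, `upperField`) be the fields of the infinitesimal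
conjugations by `E₁₁`, `E₂₁`, `E₁₂`. Annihilating the trace forces `v₄ = -v₁`; annihilating the
determinant then says that `(v₂, v₃, v₁)` is a syzygy of the regular sequence
`(x₂₁, x₁₂, x₁₁ - x₂₂)`, hence a Koszul combination, i.e. `X = g • H + r • F + q • G`. So it
suffices that `p • H`, `p • F`, `p • G` lie in the Lie span for every polynomial `p`.

`H` acts on a monomial by its weight `deg x₁₂ - deg x₂₁`, and
`⁅a • H, b • H⁆ = (a H b - b H a) • H`. Hence if `u` has weight `0` (i.e. `u ∈ ℂ[x₁₁, x₂₂, x₁₂x₂₁]`) and `w • H` lies in the span with `w`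
of nonzero weight, so does `(u * w) • H`. Every monomial is such a `u` times `x₁₂ᵏ` or `x₂₁ᵏ`, and
`x₁₂ᵏ⁺¹ • H`, `x₂₁ᵏ⁺¹ • H` come out of `⁅x₁₁ • H, x₁₂ᵏ • F⁆` and `⁅x₁₁ • H, x₂₁ᵏ • G⁆` modulo
generators of type (iii) and (v). Finally `p • F = ⁅p • H, F⁆ + F p • H`, and likewise for `G`.
-/

open MvPolynomial

noncomputable section

/-- The polynomial ring `ℂ[x₁₁, x₁₂, x₂₁, x₂₂]`, with `X 0 = x₁₁`, `X 1 = x₁₂`, `X 2 = x₂₁`,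
`X 3 = x₂₂`. -/
abbrev R4 : Type := MvPolynomial (Fin 4) ℂ

/-- The subalgebra `ℂ[x₁₁, x₂₂, x₁₂x₂₁]`. -/
def A0 : Subalgebra ℂ R4 := Algebra.adjoin ℂ {X 0, X 3, X 1 * X 2}

/-- The subalgebra `ℂ[x₁₂, x₁₁ + x₂₂, x₁₁x₂₂ − x₁₂x₂₁]`. -/
def A12 : Subalgebra ℂ R4 := Algebra.adjoin ℂ {X 1, X 0 + X 3, X 0 * X 3 - X 1 * X 2}

/-- The subalgebra `ℂ[x₂₁, x₁₁ + x₂₂, x₁₁x₂₂ − x₁₂x₂₁]`. -/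
def A21 : Subalgebra ℂ R4 := Algebra.adjoin ℂ {X 2, X 0 + X 3, X 0 * X 3 - X 1 * X 2}

/-- The set `𝒮` of derivations of the five given forms; a derivation is described by the
4-tuple of its values on the variables `x₁₁, x₁₂, x₂₁, x₂₂` (in this order), via
`MvPolynomial.mkDerivation`:
(i)   `a (x₁₂ ∂/∂x₁₂ − x₂₁ ∂/∂x₂₁)`, `a ∈ ℂ[x₁₁, x₂₂, x₁₂x₂₁]`;
(ii)  `β (−x₁₂ ∂/∂x₁₁ + (x₁₁ − x₂₂) ∂/∂x₂₁ + x₁₂ ∂/∂x₂₂)`, `β ∈ ℂ[x₁₂, tr, det]`;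
(iii) `x₁₁ α (x₁₂ ∂/∂x₁₁ − (x₁₁ − x₂₂) ∂/∂x₂₁ − x₁₂ ∂/∂x₂₂)`, `α ∈ ℂ[x₁₂, tr, det]`;
(iv), (v): the forms (ii) and (iii) with `x₁₂` and `x₂₁` interchanged everywhere. -/
def genSet : Set (Derivation ℂ R4 R4) :=
  {D | ∃ a ∈ A0, D = mkDerivation ℂ ![0, a * X 1, -(a * X 2), 0]} ∪
  {D | ∃ β ∈ A12, D = mkDerivation ℂ ![-(β * X 1), 0, β * (X 0 - X 3), β * X 1]} ∪
  {D | ∃ α ∈ A12, D = mkDerivation ℂ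
    ![X 0 * α * X 1, 0, -(X 0 * α * (X 0 - X 3)), -(X 0 * α * X 1)]} ∪
  {D | ∃ β ∈ A21, D = mkDerivation ℂ ![-(β * X 2), β * (X 0 - X 3), 0, β * X 2]} ∪
  {D | ∃ α ∈ A21, D = mkDerivation ℂ
    ![X 0 * α * X 2, -(X 0 * α * (X 0 - X 3)), 0, -(X 0 * α * X 2)]}

theorem Derivation.commutator_smul_smul {R A : Type*} [CommRing R] [CommRing A] [Algebra R A]
    (a b : A) (D₁ D₂ : Derivation R A A) :
    ⁅a • D₁, b • D₂⁆ = (a * D₁ b) • D₂ - (b * D₂ a) • D₁ + (a * b) • ⁅D₁, D₂⁆ := by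
  ext x
  simp only [commutator_apply, smul_apply, leibniz, add_apply, sub_apply, smul_eq_mul]
  ring

namespace MvPolynomial

theorem dvd_sub_aeval_of_dvd_X_sub {σ R : Type*} [CommRing R] {δ : MvPolynomial σ R}
    (f : σ → MvPolynomial σ R) (hf : ∀ i, δ ∣ X i - f i) (p : MvPolynomial σ R) :
    δ ∣ p - aeval f p := by
  have hmk : (Ideal.Quotient.mkₐ R (Ideal.span {δ})).comp (aeval f) =
      Ideal.Quotient.mkₐ R (Ideal.span {δ}) := by
    refine algHom_ext fun i => ?_
    simpa [Ideal.Quotient.eq, Ideal.mem_span_singleton] using dvd_sub_comm.mp (hf i)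
  rw [← Ideal.mem_span_singleton, ← Ideal.Quotient.eq]
  exact (DFunLike.congr_fun hmk p).symm

theorem exists_eq_koszul_of_syzygy {R : Type*} [CommRing R] [IsDomain R]
    {a b c : MvPolynomial (Fin 4) R} (h : a * X 2 + b * X 1 + c * (X 0 - X 3) = 0) :
    ∃ g q r, a = g * X 1 + q * (X 0 - X 3) ∧ b = -(g * X 2) + r * (X 0 - X 3) ∧
      c = -(r * X 1 + q * X 2) := by
  -- Modulo `X 0 - X 3` (i.e. after `X 3 ↦ X 0`) the relation is a syzygy of the primes `X 1, X 2`.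
  set φ : MvPolynomial (Fin 4) R →ₐ[R] MvPolynomial (Fin 4) R := aeval ![X 0, X 1, X 2, X 0]
  have hφ_dvd (p) : X 0 - X 3 ∣ p - φ p := by
    refine dvd_sub_aeval_of_dvd_X_sub _ (fun i => ?_) p
    fin_cases i
    all_goals simp
    exact Dvd.intro (-1) (by ring)
  have hφ : φ a * X 2 + φ b * X 1 = 0 := by simpa [φ] using congrArg φ h
  obtain ⟨g, hg⟩ : X 1 ∣ φ a := by
    have hdvd : X 1 ∣ φ a * X 2 := ⟨-φ b, by linear_combination hφ⟩
    refine (X_prime.dvd_or_dvd hdvd).resolve_right ?_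
    simp [X_dvd_X]
  have hφb : φ b = -(g * X 2) :=
    mul_left_cancel₀ (X_ne_zero 1) (by linear_combination hφ - X 2 * hg)
  obtain ⟨q, hq⟩ := hφ_dvd a
  obtain ⟨r, hr⟩ := hφ_dvd b
  have hX : (X 0 - X 3 : MvPolynomial (Fin 4) R) ≠ 0 :=
    sub_ne_zero.mpr (X_injective.ne (by decide))
  refine ⟨g, q, r, by linear_combination hq + hg, by linear_combination hr + hφb, ?_⟩
  refine mul_left_cancel₀ hX ?_
  linear_combination h - X 2 * hq - X 1 * hr - X 2 * hg - X 1 * hφb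

end MvPolynomial

local notation "x₁₁" => (X 0 : R4)
local notation "x₁₂" => (X 1 : R4)
local notation "x₂₁" => (X 2 : R4)
local notation "x₂₂" => (X 3 : R4)
local notation "𝔏" => LieSubalgebra.lieSpan ℂ (Derivation ℂ R4 R4) genSet

theorem X_zero_mem_A0 : x₁₁ ∈ A0 := Algebra.subset_adjoin (by simp)

theorem X_three_mem_A0 : x₂₂ ∈ A0 := Algebra.subset_adjoin (by simp)

theorem X_one_mul_X_two_mem_A0 : x₁₂ * x₂₁ ∈ A0 := Algebra.subset_adjoin (by simp)

theorem X_one_mem_A12 : x₁₂ ∈ A12 := Algebra.subset_adjoin (by simp)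

theorem X_two_mem_A21 : x₂₁ ∈ A21 := Algebra.subset_adjoin (by simp)

/- The fields of the infinitesimal conjugations `M ↦ [E₁₁, M]`, `M ↦ [E₂₁, M]` and
`M ↦ [M, E₁₂]` of `2 × 2` matrices; the generators in `genSet` are multiples of them. -/
def diagField : Derivation ℂ R4 R4 := mkDerivation ℂ ![0, x₁₂, -x₂₁, 0]

def lowerField : Derivation ℂ R4 R4 := mkDerivation ℂ ![-x₁₂, 0, x₁₁ - x₂₂, x₁₂]

def upperField : Derivation ℂ R4 R4 := mkDerivation ℂ ![-x₂₁, x₁₁ - x₂₂, 0, x₂₁]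

theorem lie_diagField_lowerField : ⁅diagField, lowerField⁆ = lowerField := by
  refine derivation_ext fun i => ?_
  fin_cases i <;> simp [diagField, lowerField, Derivation.commutator_apply, mkDerivation_X]

theorem lie_diagField_upperField : ⁅diagField, upperField⁆ = -upperField := by
  refine derivation_ext fun i => ?_
  fin_cases i <;> simp [diagField, upperField, Derivation.commutator_apply, mkDerivation_X]

theorem diagField_X_one_pow (k : ℕ) : diagField (x₁₂ ^ k) = (k : ℂ) • x₁₂ ^ k := by
  rw [Derivation.leibniz_pow]
  cases k <;> simp [diagField, mkDerivation_X, pow_succ, Algebra.smul_def]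

theorem diagField_X_two_pow (k : ℕ) : diagField (x₂₁ ^ k) = (-(k : ℂ)) • x₂₁ ^ k := by
  rw [Derivation.leibniz_pow]
  cases k
  · simp
  · simp [diagField, mkDerivation_X, pow_succ, Algebra.smul_def]
    ring

theorem diagField_eq_zero_of_mem_A0 {u : R4} (hu : u ∈ A0) : diagField u = 0 := by
  refine Derivation.eqOn_adjoin (D2 := 0) ?_ hu
  rintro x (rfl | rfl | rfl) <;> simp [diagField, mkDerivation_X]
  ring

theorem smul_diagField_mem_of_mem_A0 {a : R4} (ha : a ∈ A0) : a • diagField ∈ 𝔏 := by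
  refine LieSubalgebra.subset_lieSpan (Or.inl (Or.inl (Or.inl (Or.inl ⟨a, ha, ?_⟩))))
  refine derivation_ext fun i => ?_
  fin_cases i <;> simp [diagField, mkDerivation_X]

theorem smul_lowerField_mem_of_mem_A12 {β : R4} (hβ : β ∈ A12) : β • lowerField ∈ 𝔏 := by
  refine LieSubalgebra.subset_lieSpan (Or.inl (Or.inl (Or.inl (Or.inr ⟨β, hβ, ?_⟩))))
  refine derivation_ext fun i => ?_
  fin_cases i <;> simp [lowerField, mkDerivation_X]

theorem X_zero_mul_smul_lowerField_mem_of_mem_A12 {α : R4} (hα : α ∈ A12) :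
    (x₁₁ * α) • lowerField ∈ 𝔏 := by
  have h : _ ∈ 𝔏 := LieSubalgebra.subset_lieSpan (Or.inl (Or.inl (Or.inr ⟨α, hα, rfl⟩)))
  convert neg_mem h using 1
  refine derivation_ext fun i => ?_
  fin_cases i <;> simp [lowerField, mkDerivation_X]

theorem smul_upperField_mem_of_mem_A21 {β : R4} (hβ : β ∈ A21) : β • upperField ∈ 𝔏 := by
  refine LieSubalgebra.subset_lieSpan (Or.inl (Or.inr ⟨β, hβ, ?_⟩))
  refine derivation_ext fun i => ?_
  fin_cases i <;> simp [upperField, mkDerivation_X]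

theorem X_zero_mul_smul_upperField_mem_of_mem_A21 {α : R4} (hα : α ∈ A21) :
    (x₁₁ * α) • upperField ∈ 𝔏 := by
  have h : _ ∈ 𝔏 := LieSubalgebra.subset_lieSpan (Or.inr ⟨α, hα, rfl⟩)
  convert neg_mem h using 1
  refine derivation_ext fun i => ?_
  fin_cases i <;> simp [upperField, mkDerivation_X]

theorem X_one_pow_succ_smul_diagField_mem (k : ℕ) : x₁₂ ^ (k + 1) • diagField ∈ 𝔏 := by
  have hα : x₁₂ ^ k ∈ A12 := pow_mem X_one_mem_A12 k
  have hlie : ⁅x₁₁ • diagField, x₁₂ ^ k • lowerField⁆ =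
      ((k : ℂ) + 1) • ((x₁₁ * x₁₂ ^ k) • lowerField) + x₁₂ ^ (k + 1) • diagField := by
    have h0 : lowerField x₁₁ = -x₁₂ := by simp [lowerField, mkDerivation_X]
    rw [Derivation.commutator_smul_smul, lie_diagField_lowerField, diagField_X_one_pow, h0,
      mul_smul_comm, smul_assoc]
    module
  have h := sub_mem
    (LieSubalgebra.lie_mem _ (smul_diagField_mem_of_mem_A0 X_zero_mem_A0)
      (smul_lowerField_mem_of_mem_A12 hα))
    (Submodule.smul_mem _ ((k : ℂ) + 1) (X_zero_mul_smul_lowerField_mem_of_mem_A12 hα))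
  rwa [hlie, add_sub_cancel_left] at h

theorem X_two_pow_succ_smul_diagField_mem (k : ℕ) : x₂₁ ^ (k + 1) • diagField ∈ 𝔏 := by
  have hα : x₂₁ ^ k ∈ A21 := pow_mem X_two_mem_A21 k
  have hlie : ⁅x₁₁ • diagField, x₂₁ ^ k • upperField⁆ =
      x₂₁ ^ (k + 1) • diagField - ((k : ℂ) + 1) • ((x₁₁ * x₂₁ ^ k) • upperField) := by
    have h0 : upperField x₁₁ = -x₂₁ := by simp [upperField, mkDerivation_X]
    rw [Derivation.commutator_smul_smul, lie_diagField_upperField, diagField_X_two_pow, h0,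
      mul_smul_comm, smul_assoc]
    module
  have h := add_mem
    (LieSubalgebra.lie_mem _ (smul_diagField_mem_of_mem_A0 X_zero_mem_A0)
      (smul_upperField_mem_of_mem_A21 hα))
    (Submodule.smul_mem _ ((k : ℂ) + 1) (X_zero_mul_smul_upperField_mem_of_mem_A21 hα))
  rwa [hlie, sub_add_cancel] at h

theorem mul_smul_diagField_mem {u w : R4} {c : ℂ} (hu : u ∈ A0) (hw : w • diagField ∈ 𝔏)
    (hc : c ≠ 0) (hHw : diagField w = c • w) : (u * w) • diagField ∈ 𝔏 := by
  have hlie : ⁅u • diagField, w • diagField⁆ = c • ((u * w) • diagField) := by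
    rw [Derivation.commutator_smul_smul, hHw, diagField_eq_zero_of_mem_A0 hu, lie_self,
      mul_smul_comm, smul_assoc]
    module
  rw [← inv_smul_smul₀ hc ((u * w) • diagField), ← hlie]
  exact Submodule.smul_mem _ _ (LieSubalgebra.lie_mem _ (smul_diagField_mem_of_mem_A0 hu) hw)

theorem mul_X_one_pow_smul_diagField_mem {u : R4} (hu : u ∈ A0) (k : ℕ) :
    (u * x₁₂ ^ k) • diagField ∈ 𝔏 := by
  cases k with
  | zero => simpa using smul_diagField_mem_of_mem_A0 hu
  | succ k =>
    exact mul_smul_diagField_mem (c := ((k + 1 : ℕ) : ℂ)) hu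
      (X_one_pow_succ_smul_diagField_mem k) (Nat.cast_ne_zero.mpr k.succ_ne_zero)
      (diagField_X_one_pow _)

theorem mul_X_two_pow_smul_diagField_mem {u : R4} (hu : u ∈ A0) (k : ℕ) :
    (u * x₂₁ ^ k) • diagField ∈ 𝔏 := by
  cases k with
  | zero => simpa using smul_diagField_mem_of_mem_A0 hu
  | succ k =>
    exact mul_smul_diagField_mem (c := -((k + 1 : ℕ) : ℂ)) hu
      (X_two_pow_succ_smul_diagField_mem k)
      (neg_ne_zero.mpr (Nat.cast_ne_zero.mpr k.succ_ne_zero)) (diagField_X_two_pow _)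

theorem monomial_smul_diagField_mem (e : Fin 4 →₀ ℕ) : monomial e (1 : ℂ) • diagField ∈ 𝔏 := by
  have he : monomial e (1 : ℂ) = x₁₁ ^ e 0 * x₁₂ ^ e 1 * x₂₁ ^ e 2 * x₂₂ ^ e 3 := by
    rw [monomial_eq, Finsupp.prod_fintype _ _ (by simp), Fin.prod_univ_four]
    simp
  have hu (j : ℕ) : x₁₁ ^ e 0 * x₂₂ ^ e 3 * (x₁₂ * x₂₁) ^ j ∈ A0 :=
    mul_mem (mul_mem (pow_mem X_zero_mem_A0 _) (pow_mem X_three_mem_A0 _))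
      (pow_mem X_one_mul_X_two_mem_A0 _)
  rcases le_total (e 2) (e 1) with h | h
  · obtain ⟨k, hk⟩ := Nat.exists_eq_add_of_le h
    convert mul_X_one_pow_smul_diagField_mem (hu (e 2)) k using 2
    rw [he, hk]
    ring
  · obtain ⟨k, hk⟩ := Nat.exists_eq_add_of_le h
    convert mul_X_two_pow_smul_diagField_mem (hu (e 1)) k using 2
    rw [he, hk]
    ring

theorem smul_diagField_mem (p : R4) : p • diagField ∈ 𝔏 := by
  induction p using MvPolynomial.induction_on' with
  | monomial e a =>
    rw [← mul_one a, ← smul_eq_mul, ← smul_monomial, smul_assoc]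
    exact Submodule.smul_mem _ a (monomial_smul_diagField_mem e)
  | add p q hp hq => rw [add_smul]; exact add_mem hp hq

theorem smul_lowerField_mem (p : R4) : p • lowerField ∈ 𝔏 := by
  have hlie : ⁅p • diagField, (1 : R4) • lowerField⁆ =
      p • lowerField - lowerField p • diagField := by
    rw [Derivation.commutator_smul_smul, lie_diagField_lowerField, Derivation.map_one_eq_zero]
    module
  have h := add_mem
    (LieSubalgebra.lie_mem _ (smul_diagField_mem p) (smul_lowerField_mem_of_mem_A12 (one_mem _)))
    (smul_diagField_mem (lowerField p))
  rwa [hlie, sub_add_cancel] at h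

theorem smul_upperField_mem (p : R4) : p • upperField ∈ 𝔏 := by
  have hlie : ⁅p • diagField, (1 : R4) • upperField⁆ =
      -(p • upperField) - upperField p • diagField := by
    rw [Derivation.commutator_smul_smul, lie_diagField_upperField, Derivation.map_one_eq_zero]
    module
  have h := neg_mem (add_mem
    (LieSubalgebra.lie_mem _ (smul_diagField_mem p) (smul_upperField_mem_of_mem_A21 (one_mem _)))
    (smul_diagField_mem (upperField p)))
  rwa [hlie, sub_add_cancel, neg_neg] at h

theorem exists_mkDerivation_eq_of_map_trace_det {v : Fin 4 → R4}
    (htr : mkDerivation ℂ v (x₁₁ + x₂₂) = 0)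
    (hdet : mkDerivation ℂ v (x₁₁ * x₂₂ - x₁₂ * x₂₁) = 0) :
    ∃ g q r : R4, mkDerivation ℂ v = g • diagField + r • lowerField + q • upperField := by
  simp only [map_add, map_sub, Derivation.leibniz, smul_eq_mul, mkDerivation_X] at htr hdet
  obtain ⟨g, q, r, h₁, h₂, h₀⟩ := exists_eq_koszul_of_syzygy (a := v 1) (b := v 2) (c := v 0)
    (by linear_combination -hdet + x₁₁ * htr)
  refine ⟨g, q, r, derivation_ext fun i => ?_⟩
  fin_cases i <;> simp [diagField, lowerField, upperField, mkDerivation_X]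
  · linear_combination h₀
  · exact h₁
  · exact h₂
  · linear_combination htr - h₀

/-- Every polynomial vector field `X = v₁ ∂/∂x₁₁ + v₂ ∂/∂x₁₂ + v₃ ∂/∂x₂₁ + v₄ ∂/∂x₂₂`
annihilating the trace `x₁₁ + x₂₂` and the determinant `x₁₁x₂₂ − x₁₂x₂₁` lies in the Lie
subalgebra of derivations generated by `𝒮`. -/
theorem spectrum_preserving_fields_are_lie_combinations
    (v : Fin 4 → R4)
    (htr : mkDerivation ℂ v (X 0 + X 3) = 0)
    (hdet : mkDerivation ℂ v (X 0 * X 3 - X 1 * X 2) = 0) :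
    mkDerivation ℂ v ∈ LieSubalgebra.lieSpan ℂ (Derivation ℂ R4 R4) genSet := by
  obtain ⟨g, q, r, hv⟩ := exists_mkDerivation_eq_of_map_trace_det htr hdet
  rw [hv]
  exact add_mem (add_mem (smul_diagField_mem g) (smul_lowerField_mem r)) (smul_upperField_mem q)
end
end
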